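/- arXiv:1304.0161 — 6 statements merged into one kernel-verified Lean document; each statement's English description precedes it below -/
import Mathlib

section
/- Let p be a prime and q ∈ ℚ_p. Every y ∈ ℚ_p can be written uniquely as y = ⟨y⟩ + z with ⟨y⟩ ∈ ℤ[1/p] ∩ [0,1) and z ∈ ℤ_p; define the p-adic β-transformation T_q : ℤ_p → ℤ_p by T_q(x) = q·x − ⟨q·x⟩. Then the topological entropy of T_q on the compact metric space ℤ_p equals log⁺|q|_p = max(log |q|_p, 0). -/
/-!
If `‖q (x - y)‖ ≤ 1`, the fractional parts `⟨q x⟩` and `⟨q y⟩` differ by an element of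
`ℤ[1/p] ∩ ℤ_p ∩ (-1, 1) = {0}`, so `T x - T y = q (x - y)`. Hence `T` is `‖q‖`-Lipschitz, and
when `‖q‖ = p ^ k` it multiplies distances by exactly `p ^ k` at scales `≤ p ^ (-k)`. Dynamical
covers are counted through the residue maps `ℤ_p → ℤ/p^j`. Writing `max ‖q‖ 1 = p ^ k`, points
congruent mod `p ^ (m + k n)` stay `p ^ (-m)`-close for `n` steps, while points staying
`p ^ (-k)`-close for `n` steps are congruent mod `p ^ (k n)`. So minimal covers have between
`p ^ (k n)` and `p ^ (m + k n)` elements, and the entropy is `k log p = log⁺ ‖q‖`.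
-/

/-- `T : ℤ_p → ℤ_p` is the p-adic β-transformation associated to `q ∈ ℚ_p`:
for each `x ∈ ℤ_p`, `T x = q·x − ⟨q·x⟩`, where the p-adic fractional part
`⟨q·x⟩` is the unique element of `ℤ[1/p] ∩ [0,1)` with `q·x − ⟨q·x⟩ ∈ ℤ_p`. -/
def IsPadicBetaTransform (p : ℕ) [Fact p.Prime] (q : ℚ_[p]) (T : ℤ_[p] → ℤ_[p]) : Prop :=
  ∀ x : ℤ_[p], ∃ r : ℚ, (∃ a : ℤ, ∃ n : ℕ, r = (a : ℚ) / (p : ℚ) ^ n) ∧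
    0 ≤ r ∧ r < 1 ∧ ((T x : ℚ_[p]) = q * (x : ℚ_[p]) - (r : ℚ_[p]))

open Dynamics ExpGrowth Set ENNReal

section

variable {p : ℕ} [Fact p.Prime]

theorem Rat.den_div_natCast_dvd (a : ℤ) (b : ℕ) : ((a : ℚ) / b).den ∣ b := by
  have := Rat.den_dvd a b
  rw [Rat.divInt_eq_div] at this
  exact_mod_cast this

theorem Padic.den_eq_one_of_den_dvd_pow {r : ℚ} {n : ℕ} (hden : r.den ∣ p ^ n)
    (hr : ‖(r : ℚ_[p])‖ ≤ 1) : r.den = 1 := by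
  have hcop : Nat.Coprime p r.den := by
    simpa [Nat.Prime.coprime_iff_not_dvd Fact.out] using
      PadicInt.isUnit_iff.1 (PadicInt.isUnit_den r hr)
  exact Nat.Coprime.eq_one_of_dvd (hcop.pow_left n).symm hden

theorem Padic.exists_max_norm_one_eq_pow (q : ℚ_[p]) : ∃ k : ℕ, max ‖q‖ 1 = (p : ℝ) ^ k := by
  rcases eq_or_ne q 0 with rfl | hq
  · exact ⟨0, by simp⟩
  have hp : (1 : ℝ) < p := by exact_mod_cast (Fact.out : p.Prime).one_lt
  refine ⟨(-q.valuation).toNat, ?_⟩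
  rw [Padic.norm_eq_zpow_neg_valuation hq, ← zpow_natCast, Int.toNat_eq_max, ← zpow_zero (p : ℝ),
    (zpow_right_strictMono₀ hp).monotone.map_max]

theorem PadicInt.toZModPow_eq_iff_dist_le {j : ℕ} {x y : ℤ_[p]} :
    toZModPow j x = toZModPow j y ↔ dist x y ≤ (p : ℝ)⁻¹ ^ j := by
  rw [dist_eq_norm, ← sub_eq_zero, ← map_sub, ← RingHom.mem_ker, ker_toZModPow,
    ← norm_le_pow_iff_mem_span_pow, zpow_neg, zpow_natCast, inv_pow]

theorem PadicInt.uniformity_basis_dist_le_inv_pow :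
    (uniformity ℤ_[p]).HasBasis (fun _ ↦ True) fun m : ℕ ↦ {xy | dist xy.1 xy.2 ≤ (p : ℝ)⁻¹ ^ m} :=
  Metric.uniformity_basis_dist_le_pow (by simpa using (Fact.out : p.Prime).pos)
    (inv_lt_one_of_one_lt₀ (by exact_mod_cast (Fact.out : p.Prime).one_lt))

section FibreCounting

variable {X Y : Type*} [Fintype Y] {T : X → X} {U : SetRel X X} {n : ℕ} {π : X → Y}

theorem Dynamics.coverMincard_univ_le_card (hπ : π.Surjective)
    (h : ∀ x y, π x = π y → (x, y) ∈ dynEntourage T U n) :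
    coverMincard T univ U n ≤ Fintype.card Y := by
  classical
  have hcover : IsDynCoverOf T univ U n (Finset.univ.image (Function.surjInv hπ)) :=
    fun x _ ↦ ⟨_, by simp, h _ _ (Function.surjInv_eq hπ (π x)).symm⟩
  exact hcover.coverMincard_le_card.trans (by exact_mod_cast Finset.card_image_le)

theorem Dynamics.card_le_coverMincard_univ (hπ : π.Surjective)
    (h : ∀ x y, (x, y) ∈ dynEntourage T U n → π x = π y) :
    Fintype.card Y ≤ coverMincard T univ U n := by
  classical
  refine le_iInf₂ fun s hs ↦ ?_
  have himage : Finset.univ ⊆ s.image π := fun z _ ↦ by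
    obtain ⟨x, rfl⟩ := hπ z
    obtain ⟨c, hc, hxc⟩ := hs (mem_univ x)
    exact Finset.mem_image.2 ⟨c, hc, (h x c hxc).symm⟩
  exact_mod_cast (Finset.card_le_card himage).trans Finset.card_image_le

end FibreCounting

namespace IsPadicBetaTransform

variable {q : ℚ_[p]} {T : ℤ_[p] → ℤ_[p]}

theorem coe_sub_eq (hT : IsPadicBetaTransform p q T) {x y : ℤ_[p]} (h : ‖q‖ * ‖x - y‖ ≤ 1) :
    ((T x - T y : ℤ_[p]) : ℚ_[p]) = q * (x - y : ℤ_[p]) := by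
  obtain ⟨r, ⟨a, m, rfl⟩, hr0, hr1, hTx⟩ := hT x
  obtain ⟨s, ⟨b, n, rfl⟩, hs0, hs1, hTy⟩ := hT y
  set d : ℚ := a / p ^ m - b / p ^ n
  have hd : (d : ℚ_[p]) = q * (x - y : ℤ_[p]) - (T x - T y : ℤ_[p]) := by
    push_cast [d, hTx, hTy]; ring
  have hd_norm : ‖(d : ℚ_[p])‖ ≤ 1 := by
    rw [hd, sub_eq_add_neg]
    refine (Padic.nonarchimedean _ _).trans (max_le ?_ ?_)
    · rwa [norm_mul, ← PadicInt.norm_def]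
    · rw [norm_neg, ← PadicInt.norm_def]
      exact PadicInt.norm_le_one _
  have hd_den : d.den ∣ p ^ (m + n) := by
    refine (Rat.sub_den_dvd _ _).trans ?_
    rw [pow_add]
    exact_mod_cast mul_dvd_mul (Rat.den_div_natCast_dvd a (p ^ m))
      (Rat.den_div_natCast_dvd b (p ^ n))
  have hd_zero : d = 0 := by
    have hnum := Rat.den_eq_one_iff d |>.1 (Padic.den_eq_one_of_den_dvd_pow hd_den hd_norm)
    have : |d.num| < 1 := by
      rw [← Int.cast_lt (R := ℚ), Int.cast_abs, hnum, Int.cast_one, abs_lt]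
      constructor <;> linarith
    rw [← hnum, Int.abs_lt_one_iff.1 this, Int.cast_zero]
  rw [hd_zero, Rat.cast_zero, eq_comm, sub_eq_zero] at hd
  exact hd.symm

theorem norm_sub_eq (hT : IsPadicBetaTransform p q T) {x y : ℤ_[p]} (h : ‖q‖ * ‖x - y‖ ≤ 1) :
    ‖T x - T y‖ = ‖q‖ * ‖x - y‖ := by
  rw [PadicInt.norm_def, hT.coe_sub_eq h, norm_mul, ← PadicInt.norm_def]

theorem lipschitzWith (hT : IsPadicBetaTransform p q T) : LipschitzWith ‖q‖₊ T := by
  refine LipschitzWith.of_dist_le_mul fun x y ↦ ?_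
  rw [dist_eq_norm, dist_eq_norm, coe_nnnorm]
  rcases le_total (‖q‖ * ‖x - y‖) 1 with h | h
  · exact (hT.norm_sub_eq h).le
  · exact (PadicInt.norm_le_one _).trans h

theorem dist_le_of_mem_dynEntourage (hT : IsPadicBetaTransform p q T) {k : ℕ}
    (hq : ‖q‖ = (p : ℝ) ^ k) {n : ℕ} {x y : ℤ_[p]}
    (h : (x, y) ∈ dynEntourage T {xy | dist xy.1 xy.2 ≤ (p : ℝ)⁻¹ ^ k} n) :
    dist x y ≤ (p : ℝ)⁻¹ ^ (k * n) := by
  induction n generalizing x y with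
  | zero => simpa [dist_eq_norm] using PadicInt.norm_le_one (x - y)
  | succ n ih =>
    rw [mem_dynEntourage] at h
    have hxy : dist x y ≤ (p : ℝ)⁻¹ ^ k := h 0 n.succ_pos
    have hTxy : dist (T x) (T y) ≤ (p : ℝ)⁻¹ ^ (k * n) :=
      ih <| mem_dynEntourage.2 fun i hi ↦ by
        simpa only [← Function.iterate_succ_apply] using h (i + 1) (by omega)
    have hpk : (p : ℝ) ^ k * (p : ℝ)⁻¹ ^ k = 1 := by
      rw [← mul_pow, mul_inv_cancel₀ (by exact_mod_cast (Fact.out : p.Prime).ne_zero), one_pow]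
    rw [dist_eq_norm, hT.norm_sub_eq (by rw [hq, ← dist_eq_norm, ← hpk]; gcongr), hq,
      ← dist_eq_norm] at hTxy
    calc dist x y = (p : ℝ)⁻¹ ^ k * ((p : ℝ) ^ k * dist x y) := by
          rw [← mul_assoc, mul_comm _ ((p : ℝ) ^ k), hpk, one_mul]
      _ ≤ (p : ℝ)⁻¹ ^ k * (p : ℝ)⁻¹ ^ (k * n) := by gcongr
      _ = (p : ℝ)⁻¹ ^ (k * (n + 1)) := by ring

theorem coverMincard_le (hT : IsPadicBetaTransform p q T) {K : ℕ} (hK : ‖q‖ ≤ (p : ℝ) ^ K)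
    (m n : ℕ) :
    coverMincard T univ {xy | dist xy.1 xy.2 ≤ (p : ℝ)⁻¹ ^ m} n ≤ p ^ (m + K * n) := by
  have hp : (1 : ℝ) ≤ p := by exact_mod_cast (Fact.out : p.Prime).one_lt.le
  have hfibre : ∀ x y, PadicInt.toZModPow (m + K * n) x = PadicInt.toZModPow (m + K * n) y →
      (x, y) ∈ dynEntourage T {xy | dist xy.1 xy.2 ≤ (p : ℝ)⁻¹ ^ m} n := by
    intro x y hxy
    rw [PadicInt.toZModPow_eq_iff_dist_le] at hxy
    refine mem_dynEntourage.2 fun i hi ↦ ?_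
    calc dist (T^[i] x) (T^[i] y) ≤ ‖q‖ ^ i * dist x y := by
          simpa using (hT.lipschitzWith.iterate i).dist_le_mul x y
      _ ≤ ((p : ℝ) ^ K) ^ n * (p : ℝ)⁻¹ ^ (m + K * n) := by
          gcongr
          exact (pow_le_pow_left₀ (norm_nonneg q) hK i).trans
            (pow_le_pow_right₀ (one_le_pow₀ hp) hi.le)
      _ = (p : ℝ)⁻¹ ^ m := by
          rw [pow_add, pow_mul, inv_pow _ K, mul_left_comm, ← mul_pow,
            mul_inv_cancel₀ (by positivity), one_pow, mul_one]
  simpa using coverMincard_univ_le_card (ZMod.ringHom_surjective _) hfibre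

theorem le_coverMincard (hT : IsPadicBetaTransform p q T) {k : ℕ} (hq : ‖q‖ = (p : ℝ) ^ k)
    (n : ℕ) :
    p ^ (k * n) ≤ coverMincard T univ {xy | dist xy.1 xy.2 ≤ (p : ℝ)⁻¹ ^ k} n := by
  simpa using card_le_coverMincard_univ
    (ZMod.ringHom_surjective (PadicInt.toZModPow (p := p) (k * n))) fun x y hxy ↦ PadicInt.toZModPow_eq_iff_dist_le.2 (hT.dist_le_of_mem_dynEntourage hq hxy)

theorem coverEntropy_le (hT : IsPadicBetaTransform p q T) {K : ℕ} (hK : ‖q‖ ≤ (p : ℝ) ^ K) :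
    coverEntropy T univ ≤ log ((p : ℝ≥0∞) ^ K) := by
  rw [coverEntropy_eq_iSup_basis PadicInt.uniformity_basis_dist_le_inv_pow]
  refine iSup₂_le fun m _ ↦ ?_
  calc coverEntropyEntourage T univ {xy | dist xy.1 xy.2 ≤ (p : ℝ)⁻¹ ^ m}
      ≤ expGrowthSup fun n ↦ ((p : ℝ≥0∞) ^ K) ^ n := by
        refine expGrowthSup_le_of_eventually_le (b := (p : ℝ≥0∞) ^ m)
          (pow_ne_top (natCast_ne_top p)) (Filter.Eventually.of_forall fun n ↦ ?_)
        rw [← pow_mul, ← pow_add]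
        exact_mod_cast ENat.toENNReal_mono (hT.coverMincard_le hK m n)
    _ = log ((p : ℝ≥0∞) ^ K) := expGrowthSup_pow

theorem le_coverEntropy (hT : IsPadicBetaTransform p q T) {k : ℕ} (hq : ‖q‖ = (p : ℝ) ^ k) :
    log ((p : ℝ≥0∞) ^ k) ≤ coverEntropy T univ :=
  calc log ((p : ℝ≥0∞) ^ k) = expGrowthSup fun n ↦ ((p : ℝ≥0∞) ^ k) ^ n :=
        expGrowthSup_pow.symm
    _ ≤ coverEntropyEntourage T univ {xy | dist xy.1 xy.2 ≤ (p : ℝ)⁻¹ ^ k} :=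
        expGrowthSup_monotone fun n ↦ by
          rw [← pow_mul]
          simpa using ENat.toENNReal_mono (hT.le_coverMincard hq n)
    _ ≤ coverEntropy T univ :=
        coverEntropyEntourage_le_coverEntropy T univ
          (PadicInt.uniformity_basis_dist_le_inv_pow.mem_of_mem trivial)

end IsPadicBetaTransform

end

/-- The topological entropy of the p-adic β-transformation `T_q` on the compact
metric space `ℤ_p` equals `log⁺ |q|_p = max (log |q|_p) 0`. -/
theorem topologicalEntropy_padic_beta_transform (p : ℕ) [Fact p.Prime] (q : ℚ_[p])
    (T : ℤ_[p] → ℤ_[p]) (hT : IsPadicBetaTransform p q T) :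
    Dynamics.coverEntropy T Set.univ = ((max (Real.log ‖q‖) 0 : ℝ) : EReal) := by
  obtain ⟨k, hk⟩ := Padic.exists_max_norm_one_eq_pow q
  have hlog : ((max (Real.log ‖q‖) 0 : ℝ) : EReal) = log ((p : ℝ≥0∞) ^ k) := by
    have hposLog : max (Real.log ‖q‖) 0 = Real.log (max ‖q‖ 1) := by
      rw [max_comm, max_comm ‖q‖]
      exact Real.posLog_eq_log_max_one (norm_nonneg q)
    rw [hposLog, ← log_ofReal_of_pos (lt_max_of_lt_right one_pos), hk,
      ENNReal.ofReal_pow (Nat.cast_nonneg p), ofReal_natCast]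
  rw [hlog]
  refine le_antisymm (hT.coverEntropy_le (hk ▸ le_max_left _ _)) ?_
  rcases k.eq_zero_or_pos with rfl | hk0
  · simpa using coverEntropy_nonneg T univ_nonempty
  · have hmax : max ‖q‖ 1 ≠ 1 :=
      hk ▸ (one_lt_pow₀ (by exact_mod_cast (Fact.out : p.Prime).one_lt) hk0.ne').ne'
    exact hT.le_coverEntropy (((max_choice ‖q‖ 1).resolve_right hmax).symm.trans hk)
end

section
/- Let p be a prime and q ∈ ℚ_p with |q|_p > 1. Then the p-adic β-transformation T_q : ℤ_p → ℤ_p, T_q(x) = q·x − ⟨q·x⟩, is ergodic with respect to the Haar probability measure on the compact additive group ℤ_p (which T_q preserves). -/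
/-!
The fractional part `⟨q x⟩` is locally constant, so `T` is affine with linear part `q` on every
ball of radius `‖q‖⁻¹`; equivalently `T (q⁻¹ t + x) = t + T x` for all `t, x ∈ ℤ_p`. Iterating,
`T^[n]` maps each ball `B` of radius `‖q‖⁻¹ ^ n` affinely onto `ℤ_p`, and by uniqueness of Haar
measure it pushes `μ` restricted to `B` forward to `μ B • μ` (for `B = ℤ_p`, `n = 1` this is the
invariance of `μ`). For a `T`-invariant set `A` this gives `μ (B ∩ A) = μ B * μ A`. In the
ultrametric space `ℤ_p` these balls form a π-system generating the Borel σ-algebra, so `A` is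
independent of itself and `μ A ∈ {0, 1}`.
-/

open MeasureTheory

noncomputable instance (p : ℕ) [Fact p.Prime] : MeasurableSpace ℤ_[p] := borel _

instance (p : ℕ) [Fact p.Prime] : BorelSpace ℤ_[p] := ⟨rfl⟩

open Metric Filter Topology ProbabilityTheory

section CompactGroup

variable {G : Type*} [AddGroup G] [TopologicalSpace G] [IsTopologicalAddGroup G] [CompactSpace G]
  [MeasurableSpace G] [BorelSpace G]

lemma MeasureTheory.Measure.eq_measure_univ_smul_of_isAddLeftInvariant (μ ν : Measure G)
    [μ.IsAddHaarMeasure] [IsProbabilityMeasure μ] [IsFiniteMeasure ν] [ν.IsAddLeftInvariant] :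
    ν = ν Set.univ • μ := by
  conv_rhs => rw [Measure.isAddInvariant_eq_smul_of_compactSpace ν μ]
  conv_lhs => rw [Measure.isAddInvariant_eq_smul_of_compactSpace ν μ]
  simp

lemma MeasureTheory.Measure.map_restrict_eq_smul_of_forall_add (μ : Measure G)
    [μ.IsAddHaarMeasure] [IsProbabilityMeasure μ] {f : G → G} (hf : Measurable f) {B : Set G}
    (h : ∀ t, ∃ s, (s + ·) ⁻¹' B = B ∧ ∀ x, f (s + x) = t + f x) :
    (μ.restrict B).map f = μ B • μ := by
  have : ((μ.restrict B).map f).IsAddLeftInvariant := by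
    refine ⟨fun t => ?_⟩
    obtain ⟨s, hsB, hfs⟩ := h t
    have hB : (μ.restrict B).map (s + ·) = μ.restrict B := by
      conv_lhs => rw [← hsB]
      rw [← MeasurableEquiv.coe_addLeft, ← MeasurableEquiv.restrict_map,
        MeasurableEquiv.coe_addLeft, map_add_left_eq_self]
    calc ((μ.restrict B).map f).map (t + ·) = (μ.restrict B).map ((t + ·) ∘ f) :=
          map_map (measurable_const_add t) hf
      _ = (μ.restrict B).map (f ∘ (s + ·)) := by congr 1; funext x; simp [hfs]
      _ = (μ.restrict B).map f := by rw [← map_map hf (measurable_const_add s), hB]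
  rw [eq_measure_univ_smul_of_isAddLeftInvariant μ ((μ.restrict B).map f),
    map_apply hf MeasurableSet.univ, Set.preimage_univ, restrict_apply_univ]

end CompactGroup

section Ultrametric

variable {X : Type*} [PseudoMetricSpace X] [IsUltrametricDist X]

lemma IsUltrametricDist.isPiSystem_closedBall {ι : Type*} (r : ι → ℝ) :
    IsPiSystem {B : Set X | ∃ c i, closedBall c (r i) = B} := by
  rintro _ ⟨c, i, rfl⟩ _ ⟨c', i', rfl⟩ hne
  rcases closedBall_subset_trichotomy c c' (r i) (r i') with h | h | h
  · exact ⟨c, i, (Set.inter_eq_left.2 h).symm⟩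
  · exact ⟨c', i', (Set.inter_eq_right.2 h).symm⟩
  · exact absurd h (Set.not_disjoint_iff_nonempty_inter.2 hne)

lemma IsUltrametricDist.isTopologicalBasis_closedBall {r : ℕ → ℝ} (hr0 : ∀ n, 0 < r n)
    (hr : Tendsto r atTop (𝓝 0)) :
    TopologicalSpace.IsTopologicalBasis {B : Set X | ∃ c n, closedBall c (r n) = B} := by
  refine TopologicalSpace.isTopologicalBasis_of_isOpen_of_nhds ?_ fun x U hx hU => ?_
  · rintro _ ⟨c, n, rfl⟩
    exact isOpen_closedBall c (hr0 n).ne'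
  · obtain ⟨ε, hε, hball⟩ := Metric.isOpen_iff.1 hU x hx
    obtain ⟨n, hn⟩ := (hr.eventually (gt_mem_nhds hε)).exists
    exact ⟨_, ⟨x, n, rfl⟩, mem_closedBall_self (hr0 n).le,
      (closedBall_subset_ball hn).trans hball⟩

lemma IsUltrametricDist.preimage_add_closedBall_of_norm_le {E : Type*} [SeminormedAddCommGroup E]
    [IsUltrametricDist E] {s c : E} {r : ℝ} (hs : ‖s‖ ≤ r) :
    (s + ·) ⁻¹' closedBall c r = closedBall c r := by
  rw [preimage_add_closedBall, closedBall_eq_of_mem (x := c)]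
  simpa [dist_eq_norm] using hs

end Ultrametric

lemma ProbabilityTheory.measure_eq_zero_or_one_of_forall_measure_inter_eq_mul
    {Ω : Type*} [m : MeasurableSpace Ω] {μ : Measure Ω} [IsProbabilityMeasure μ]
    {𝒞 : Set (Set Ω)} (hgen : m = MeasurableSpace.generateFrom 𝒞) (hpi : IsPiSystem 𝒞)
    {A : Set Ω} (hA : MeasurableSet A) (h : ∀ B ∈ 𝒞, μ (B ∩ A) = μ B * μ A) :
    μ A = 0 ∨ μ A = 1 := by
  have hind : Indep m (MeasurableSpace.generateFrom {A}) μ := by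
    refine IndepSets.indep le_rfl (MeasurableSpace.generateFrom_le (by simpa using hA)) hpi
      (IsPiSystem.singleton A) hgen rfl ?_
    rw [IndepSets_iff]
    rintro B _ hB rfl
    exact h B hB
  exact measure_eq_zero_or_one_of_indepSet_self
    (indep_of_indep_of_le_left hind (MeasurableSpace.generateFrom_le (by simpa using hA)))

lemma PreErgodic.of_measure_eq_zero_or_one {α : Type*} [MeasurableSpace α] {μ : Measure α}
    [IsProbabilityMeasure μ] {f : α → α}
    (h : ∀ s, MeasurableSet s → f ⁻¹' s = s → μ s = 0 ∨ μ s = 1) : PreErgodic f μ := by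
  refine ⟨fun s hs hfs => Filter.eventuallyConst_set'.2 ?_⟩
  refine (h s hs hfs).imp ae_eq_empty.2 fun h1 => ?_
  rw [ae_eq_univ_iff_measure_eq hs.nullMeasurableSet, h1, measure_univ]

lemma Function.iterate_mul_add_eq {R : Type*} [Semiring R] {f : R → R} {b : R}
    (h : ∀ t x, f (b * t + x) = t + f x) (n : ℕ) (t x : R) :
    f^[n] (b ^ n * t + x) = t + f^[n] x := by
  induction n generalizing x with
  | zero => simp
  | succ n ih =>
    rw [Function.iterate_succ_apply, Function.iterate_succ_apply, pow_succ', mul_assoc, h, ih]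

namespace Padic

variable {p : ℕ} [Fact p.Prime]

lemma exists_padicInt_mul_eq_one {q : ℚ_[p]} (hq : 1 ≤ ‖q‖) : ∃ b : ℤ_[p], (b : ℚ_[p]) * q = 1 :=
  ⟨⟨q⁻¹, by rw [norm_inv]; exact inv_le_one_of_one_le₀ hq⟩,
    inv_mul_cancel₀ (norm_pos_iff.1 (one_pos.trans_le hq))⟩

lemma exists_eq_intCast_of_norm_le_one {a : ℤ} {n : ℕ} (h : ‖((a / p ^ n : ℚ) : ℚ_[p])‖ ≤ 1) :
    ∃ m : ℤ, (a / p ^ n : ℚ) = m := by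
  have hp : (0 : ℝ) < p := by exact_mod_cast (Fact.out : p.Prime).pos
  have ha : ‖(a : ℚ_[p])‖ ≤ (p : ℝ) ^ (-(n : ℤ)) := by
    push_cast at h
    rwa [norm_div, norm_pow, norm_p, div_le_one (by positivity), inv_pow, ← zpow_natCast,
      ← zpow_neg] at h
  obtain ⟨m, rfl⟩ := (norm_int_le_pow_iff_dvd a n).1 ha
  exact ⟨m, by push_cast; exact mul_div_cancel_left₀ _ (pow_ne_zero _ (by exact_mod_cast hp.ne'))⟩

lemma eq_of_norm_sub_le_one {r r' : ℚ} (hr : ∃ a : ℤ, ∃ n : ℕ, r = a / p ^ n)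
    (hr' : ∃ a : ℤ, ∃ n : ℕ, r' = a / p ^ n) (hr0 : 0 ≤ r) (hr1 : r < 1) (hr0' : 0 ≤ r')
    (hr1' : r' < 1) (h : ‖((r - r' : ℚ) : ℚ_[p])‖ ≤ 1) : r = r' := by
  obtain ⟨a, n, rfl⟩ := hr
  obtain ⟨a', n', rfl⟩ := hr'
  have hp : (p : ℚ) ≠ 0 := by exact_mod_cast (Fact.out : p.Prime).ne_zero
  have hsub : (a / p ^ n - a' / p ^ n' : ℚ) =
      ((a * p ^ n' - a' * p ^ n : ℤ) : ℚ) / p ^ (n + n') := by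
    push_cast; field_simp; ring
  rw [hsub] at h
  obtain ⟨m, hm⟩ := exists_eq_intCast_of_norm_le_one h
  rw [← hsub] at hm
  have : m = 0 := by
    have hlt : |(m : ℚ)| < 1 := by rw [← hm, abs_lt]; constructor <;> linarith
    rwa [← Int.cast_abs, ← Int.cast_one, Int.cast_lt, Int.abs_lt_one_iff] at hlt
  rw [this, Int.cast_zero, sub_eq_zero] at hm
  exact hm

end Padic

namespace IsPadicBetaTransform

variable {p : ℕ} [Fact p.Prime] {q : ℚ_[p]} {T : ℤ_[p] → ℤ_[p]}

lemma coe_sub_coe (hT : IsPadicBetaTransform p q T) {x y : ℤ_[p]} (h : ‖q * (x - y)‖ ≤ 1) :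
    (T x - T y : ℚ_[p]) = q * (x - y) := by
  obtain ⟨r, hr, hr0, hr1, hx⟩ := hT x
  obtain ⟨r', hr', hr0', hr1', hy⟩ := hT y
  have hdiff : ((r - r' : ℚ) : ℚ_[p]) = q * (x - y) - ((T x - T y : ℤ_[p]) : ℚ_[p]) := by
    push_cast; rw [hx, hy]; ring
  have : r = r' := Padic.eq_of_norm_sub_le_one hr hr' hr0 hr1 hr0' hr1' <| by
    rw [hdiff, sub_eq_add_neg]
    exact (IsUltrametricDist.norm_add_le_max _ _).trans
      (max_le h (by rw [norm_neg]; exact PadicInt.norm_le_one _))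
  rw [hx, hy, this]; ring

lemma mul_add_eq (hT : IsPadicBetaTransform p q T) {b : ℤ_[p]} (hb : (b : ℚ_[p]) * q = 1)
    (t x : ℤ_[p]) : T (b * t + x) = t + T x := by
  have hqt : q * ((b * t + x : ℤ_[p]) - x : ℚ_[p]) = t := by
    push_cast; linear_combination (t : ℚ_[p]) * hb
  have := hT.coe_sub_coe (by rw [hqt]; exact t.norm_le_one)
  apply Subtype.ext
  push_cast
  linear_combination this + hqt

lemma continuous (hT : IsPadicBetaTransform p q T) (hq : q ≠ 0) : Continuous T := by
  rw [Metric.continuous_iff]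
  intro x ε hε
  have hq' : 0 < ‖q‖ := norm_pos_iff.2 hq
  refine ⟨min ε 1 / ‖q‖, by positivity, fun y hy => ?_⟩
  rw [dist_eq_norm, PadicInt.norm_def, PadicInt.coe_sub] at hy ⊢
  have hlt : ‖q * (y - x)‖ < min ε 1 := by rwa [norm_mul, ← lt_div_iff₀' hq']
  rw [hT.coe_sub_coe (hlt.le.trans (min_le_right _ _))]
  exact hlt.trans_le (min_le_left _ _)

section Measure

variable (μ : Measure ℤ_[p]) [μ.IsAddHaarMeasure] [IsProbabilityMeasure μ]

lemma measurePreserving (hT : IsPadicBetaTransform p q T) (hq : 1 ≤ ‖q‖) :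
    MeasurePreserving T μ μ := by
  obtain ⟨b, hb⟩ := Padic.exists_padicInt_mul_eq_one hq
  have hTm := (hT.continuous (norm_pos_iff.1 (one_pos.trans_le hq))).measurable
  refine ⟨hTm, ?_⟩
  simpa using Measure.map_restrict_eq_smul_of_forall_add μ hTm (B := Set.univ)
    fun t => ⟨b * t, rfl, hT.mul_add_eq hb t⟩

lemma map_iterate_restrict_closedBall (hT : IsPadicBetaTransform p q T) (hq : 1 ≤ ‖q‖) (n : ℕ)
    (c : ℤ_[p]) :
    (μ.restrict (closedBall c (‖q‖⁻¹ ^ n))).map T^[n] = μ (closedBall c (‖q‖⁻¹ ^ n)) • μ := by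
  obtain ⟨b, hb⟩ := Padic.exists_padicInt_mul_eq_one hq
  have hbq : ‖b‖ = ‖q‖⁻¹ :=
    eq_inv_of_mul_eq_one_left (by rw [PadicInt.norm_def, ← norm_mul, hb, norm_one])
  refine Measure.map_restrict_eq_smul_of_forall_add μ
    ((hT.continuous (norm_pos_iff.1 (one_pos.trans_le hq))).measurable.iterate n) fun t =>
      ⟨b ^ n * t, IsUltrametricDist.preimage_add_closedBall_of_norm_le ?_,
        Function.iterate_mul_add_eq (hT.mul_add_eq hb) n t⟩
  rw [norm_mul, norm_pow, hbq]
  exact mul_le_of_le_one_right (by positivity) t.norm_le_one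

lemma measure_closedBall_inter_of_preimage_eq (hT : IsPadicBetaTransform p q T) (hq : 1 ≤ ‖q‖)
    {A : Set ℤ_[p]} (hA : MeasurableSet A) (hTA : T ⁻¹' A = A) (n : ℕ) (c : ℤ_[p]) :
    μ (closedBall c (‖q‖⁻¹ ^ n) ∩ A) = μ (closedBall c (‖q‖⁻¹ ^ n)) * μ A := by
  have hTm := (hT.continuous (norm_pos_iff.1 (one_pos.trans_le hq))).measurable.iterate n
  have := congrArg (· A) (hT.map_iterate_restrict_closedBall μ hq n c)
  simp only [Measure.smul_apply, smul_eq_mul] at this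
  rwa [Measure.map_apply hTm hA, Measure.restrict_apply (hA.preimage hTm),
    Function.IsFixedPt.preimage_iterate hTA n, Set.inter_comm] at this

end Measure

end IsPadicBetaTransform

/-- If `|q|_p > 1` then the p-adic β-transformation `T_q` is ergodic with respect to
the Haar probability measure on the compact additive group `ℤ_p`. -/
theorem padic_beta_transform_ergodic (p : ℕ) [Fact p.Prime] (q : ℚ_[p]) (hq : 1 < ‖q‖)
    (T : ℤ_[p] → ℤ_[p]) (hT : IsPadicBetaTransform p q T)
    (μ : Measure ℤ_[p]) [μ.IsAddHaarMeasure] [IsProbabilityMeasure μ] :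
    Ergodic T μ := by
  have hr0 : 0 < ‖q‖⁻¹ := inv_pos.2 (one_pos.trans hq)
  have hbasis := IsUltrametricDist.isTopologicalBasis_closedBall (X := ℤ_[p])
    (fun n => pow_pos hr0 n)
    (tendsto_pow_atTop_nhds_zero_of_lt_one hr0.le (inv_lt_one_of_one_lt₀ hq))
  have hgen := BorelSpace.measurable_eq.trans hbasis.borel_eq_generateFrom
  refine ⟨hT.measurePreserving μ hq.le, .of_measure_eq_zero_or_one fun A hA hTA => ?_⟩
  refine measure_eq_zero_or_one_of_forall_measure_inter_eq_mul hgen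
    (IsUltrametricDist.isPiSystem_closedBall _) hA ?_
  rintro _ ⟨c, n, rfl⟩
  exact hT.measure_closedBall_inter_of_preimage_eq μ hq.le hA hTA n c
end

section
/- Let p be a prime, let U denote the set of roots of unity contained in ℚ_p, and let q ∈ ℚ_p \ U. Let Per_n(T_q) = {x ∈ ℤ_p : T_q^n(x) = x} be the set of points of period n of the p-adic β-transformation T_q(x) = q·x − ⟨q·x⟩. Then Per_n(T_q) is finite and log |Per_n(T_q)| = n·log⁺|q|_p; equivalently, the cardinality of Per_n(T_q) equals max(|q|_p, 1)^n. -/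
/-!
The fractional part `⟨q x⟩` lies in `ℤ[1/p] ∩ [0, 1)`, and `ℤ[1/p] ∩ ℤ_p = ℤ`. Hence, with
`p ^ k = max(|q|_p, 1)`, we have `T x = y` exactly when `q x - y` is one of the `p ^ k` digits
`c / p ^ k`, `0 ≤ c < p ^ k`. A point of period `n` is therefore the same as a cyclic sequence
`x : ZMod n → ℤ_p` with every `q x_j - x_{j+1}` a digit. As `q ^ n ≠ 1`, the linear map
`x ↦ (q x_j - x_{j+1})_j` of `ℚ_p ^ n` is invertible, and the preimage of a digit sequence is
integral: if `|q|_p > 1`, at a coordinate where `|x_j|` is maximal the ultrametric inequality gives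
`|q| |x_j| ≤ max(|q|, |x_j|)`, so `|x_j| ≤ 1`; if `|q|_p ≤ 1`, the only digit is `0`. So the
periodic points are counted by the `(p ^ k) ^ n` digit sequences.
-/

open Function

theorem IsUltrametricDist.norm_sub_le_max {E : Type*} [SeminormedAddGroup E] [IsUltrametricDist E]
    (x y : E) : ‖x - y‖ ≤ max ‖x‖ ‖y‖ := by
  simpa only [sub_eq_add_neg, norm_neg] using norm_add_le_max x (-y)

section CyclicOrbit

variable {α : Type*} {n : ℕ}

theorem ZMod.apply_natCast_eq_iterate {f : α → α} {x : ZMod n → α}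
    (hx : ∀ j, f (x j) = x (j + 1)) (m : ℕ) : x m = f^[m] (x 0) := by
  induction m with
  | zero => simp
  | succ m ih => rw [Nat.cast_succ, ← hx, ih, iterate_succ_apply']

def periodicPtsEquivCyclicOrbit (f : α → α) (n : ℕ) [NeZero n] :
    {y // IsPeriodicPt f n y} ≃ {x : ZMod n → α // ∀ j, f (x j) = x (j + 1)} where
  toFun y := ⟨fun j => f^[j.val] y, fun j => by
    rw [← iterate_succ_apply' f, ← y.2.iterate_mod_apply, ← ZMod.val_natCast,
      Nat.cast_succ, ZMod.natCast_zmod_val]⟩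
  invFun x := ⟨x.1 0, by
    rw [IsPeriodicPt, IsFixedPt, ← ZMod.apply_natCast_eq_iterate x.2, ZMod.natCast_self]⟩
  left_inv y := by simp
  right_inv x := by
    ext j
    simp only
    rw [← ZMod.apply_natCast_eq_iterate x.2, ZMod.natCast_zmod_val]

end CyclicOrbit

section ShiftEquation

variable {n : ℕ} [NeZero n]

theorem eq_zero_of_forall_mul_eq_apply_add_one {R : Type*} [Ring R] [NoZeroDivisors R] {q : R}
    (hq : q ^ n ≠ 1) {z : ZMod n → R} (hz : ∀ j, q * z j = z (j + 1)) : z = 0 := by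
  have hiter (m : ℕ) : z m = q ^ m * z 0 := by
    rw [ZMod.apply_natCast_eq_iterate hz, mul_left_iterate_apply]
  have h0 : z 0 = 0 := by
    have h : (q ^ n - 1) * z 0 = 0 := by
      rw [sub_mul, one_mul, ← hiter, ZMod.natCast_self, sub_self]
    exact (mul_eq_zero.mp h).resolve_left (sub_ne_zero.mpr hq)
  ext j
  rw [← ZMod.natCast_zmod_val j, hiter, h0, mul_zero, Pi.zero_apply]

theorem exists_forall_mul_sub_apply_add_one_eq {K : Type*} [Field K] {q : K} (hq : q ^ n ≠ 1)
    (d : ZMod n → K) : ∃ x : ZMod n → K, ∀ j, q * x j - x (j + 1) = d j := by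
  let L : (ZMod n → K) →ₗ[K] (ZMod n → K) := q • LinearMap.id - LinearMap.funLeft K K (· + 1)
  have hL : ∀ x j, L x j = q * x j - x (j + 1) := fun _ _ => rfl
  have hinj : Injective L := by
    refine (injective_iff_map_eq_zero L).mpr fun z hz =>
      eq_zero_of_forall_mul_eq_apply_add_one hq fun j => ?_
    rw [← sub_eq_zero, ← hL, hz, Pi.zero_apply]
  obtain ⟨x, hx⟩ := LinearMap.injective_iff_surjective.mp hinj d
  exact ⟨x, fun j => by rw [← hL, hx]⟩

theorem norm_le_one_of_forall_norm_mul_sub_le {K ι : Type*} [NormedField K] [IsUltrametricDist K]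
    [Finite ι] {q : K} (hq : 1 < ‖q‖) {σ : ι → ι} {x : ι → K}
    (h : ∀ j, ‖q * x j - x (σ j)‖ ≤ ‖q‖) (j : ι) : ‖x j‖ ≤ 1 := by
  have : Nonempty ι := ⟨j⟩
  obtain ⟨i, hi⟩ := Finite.exists_max fun j => ‖x j‖
  refine (hi j).trans (not_lt.mp fun hM => ?_)
  have : ‖q‖ * ‖x i‖ ≤ max ‖q‖ ‖x i‖ := by
    calc ‖q‖ * ‖x i‖ = ‖(q * x i - x (σ i)) + x (σ i)‖ := by rw [sub_add_cancel, norm_mul]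
      _ ≤ max ‖q * x i - x (σ i)‖ ‖x (σ i)‖ := IsUltrametricDist.norm_add_le_max _ _
      _ ≤ max ‖q‖ ‖x i‖ := max_le_max (h i) (hi _)
  rcases max_cases ‖q‖ ‖x i‖ with ⟨hmax, -⟩ | ⟨hmax, -⟩ <;> rw [hmax] at this <;> nlinarith

end ShiftEquation

namespace Padic

variable {p : ℕ} [Fact p.Prime]

theorem exists_intCast_eq_of_norm_le_one {r : ℚ} (hr : ∃ a : ℤ, ∃ m : ℕ, r = a / p ^ m)
    (h : ‖(r : ℚ_[p])‖ ≤ 1) : ∃ c : ℤ, r = c := by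
  obtain ⟨a, m, rfl⟩ := hr
  have hp : (p : ℚ) ≠ 0 := Nat.cast_ne_zero.mpr (Fact.out : p.Prime).ne_zero
  have hdvd : (p ^ m : ℤ) ∣ a := by
    have ha : (a : ℚ_[p]) = ((a / p ^ m * p ^ m : ℚ) : ℚ_[p]) := by
      rw [div_mul_cancel₀ _ (pow_ne_zero m hp), Rat.cast_intCast]
    rw [Rat.cast_mul, Rat.cast_pow, Rat.cast_natCast] at ha
    rw [← norm_int_le_pow_iff_dvd, ha, norm_mul, norm_p_pow]
    exact mul_le_of_le_one_left (by positivity) h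
  obtain ⟨c, rfl⟩ := hdvd
  exact ⟨c, by push_cast; field_simp⟩

theorem eq_of_norm_sub_le_one_s3 {r s : ℚ} (hr : ∃ a : ℤ, ∃ m : ℕ, r = a / p ^ m)
    (hs : ∃ a : ℤ, ∃ m : ℕ, s = a / p ^ m) (hr0 : 0 ≤ r) (hr1 : r < 1) (hs0 : 0 ≤ s) (hs1 : s < 1)
    (h : ‖((r - s : ℚ) : ℚ_[p])‖ ≤ 1) : r = s := by
  obtain ⟨a, m, rfl⟩ := hr
  obtain ⟨b, l, rfl⟩ := hs
  have hp : (p : ℚ) ≠ 0 := Nat.cast_ne_zero.mpr (Fact.out : p.Prime).ne_zero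
  obtain ⟨c, hc⟩ := exists_intCast_eq_of_norm_le_one
    ⟨a * p ^ l - b * p ^ m, m + l, by push_cast; field_simp; ring⟩ h
  have hc0 : c = 0 := by
    have : |(c : ℚ)| < 1 := abs_lt.mpr ⟨by linarith, by linarith⟩
    exact Int.abs_lt_one_iff.mp (by exact_mod_cast this)
  rw [hc0, Int.cast_zero, sub_eq_zero] at hc
  exact hc

theorem exists_fin_eq_div_pow_of_norm_le {r : ℚ} (hr : ∃ a : ℤ, ∃ m : ℕ, r = a / p ^ m)
    (hr0 : 0 ≤ r) (hr1 : r < 1) {k : ℕ} (h : ‖(r : ℚ_[p])‖ ≤ (p : ℝ) ^ k) :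
    ∃ c : Fin (p ^ k), r = (c : ℚ) / p ^ k := by
  obtain ⟨a, m, rfl⟩ := hr
  have hpk : (0 : ℚ) < (p : ℚ) ^ k := pow_pos (Nat.cast_pos.mpr (Fact.out : p.Prime).pos) k
  have hnorm : ‖((a / p ^ m * p ^ k : ℚ) : ℚ_[p])‖ ≤ 1 := by
    rw [Rat.cast_mul, norm_mul, Rat.cast_pow, Rat.cast_natCast, norm_p_pow, zpow_neg, zpow_natCast]
    exact mul_inv_le_one_of_le₀ h (by positivity)
  obtain ⟨c, hc⟩ := exists_intCast_eq_of_norm_le_one ⟨a * p ^ k, m, by push_cast; ring⟩ hnorm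
  have hc0 : 0 ≤ c := by exact_mod_cast hc ▸ mul_nonneg hr0 hpk.le
  lift c to ℕ using hc0
  have hc1 : c < p ^ k := by exact_mod_cast hc ▸ mul_lt_of_lt_one_left hpk hr1
  refine ⟨⟨c, hc1⟩, ?_⟩
  rw [eq_div_iff hpk.ne', hc]
  rfl

noncomputable def betaDigit (p : ℕ) [Fact p.Prime] (k : ℕ) (c : Fin (p ^ k)) : ℚ_[p] :=
  ((c / p ^ k : ℚ) : ℚ_[p])

theorem betaDigit_injective (k : ℕ) : Injective (betaDigit p k) := by
  intro c c' h
  have hpk : (p : ℚ) ^ k ≠ 0 := pow_ne_zero k (Nat.cast_ne_zero.mpr (Fact.out : p.Prime).ne_zero)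
  have : (c : ℚ) / p ^ k = (c' : ℚ) / p ^ k := Rat.cast_injective h
  exact Fin.ext (by exact_mod_cast (div_left_inj' hpk).mp this)

theorem norm_betaDigit_le {k : ℕ} (c : Fin (p ^ k)) : ‖betaDigit p k c‖ ≤ (p : ℝ) ^ k := by
  rw [betaDigit, Rat.cast_div, Rat.cast_natCast, Rat.cast_pow, Rat.cast_natCast, norm_div,
    norm_p_pow, zpow_neg, zpow_natCast, div_inv_eq_mul]
  exact mul_le_of_le_one_left (by positivity) (IsUltrametricDist.norm_natCast_le_one ℚ_[p] c)

theorem betaDigit_zero (c : Fin (p ^ 0)) : betaDigit p 0 c = 0 := by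
  have : (c : ℕ) = 0 := by simpa using c.2
  simp [betaDigit, this]

theorem exists_max_norm_one_eq_pow_s3 (q : ℚ_[p]) : ∃ k : ℕ, max ‖q‖ 1 = (p : ℝ) ^ k := by
  rcases le_or_gt ‖q‖ 1 with hq | hq
  · exact ⟨0, by rw [max_eq_right hq, pow_zero]⟩
  have hq0 : q ≠ 0 := by rintro rfl; norm_num at hq
  have hv : 0 < -q.valuation := by
    by_contra! hv
    rw [norm_eq_zpow_neg_valuation hq0] at hq
    exact (zpow_le_one_of_nonpos₀ (by exact_mod_cast (Fact.out : p.Prime).one_le) hv).not_gt hq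
  refine ⟨(-q.valuation).toNat, ?_⟩
  rw [max_eq_left hq.le, norm_eq_zpow_neg_valuation hq0, ← zpow_natCast, Int.toNat_of_nonneg hv.le]

variable {n : ℕ} [NeZero n] {q : ℚ_[p]}

theorem norm_le_one_of_forall_mul_sub_mem_range_betaDigit (hqn : q ^ n ≠ 1) {k : ℕ}
    (hk : max ‖q‖ 1 = (p : ℝ) ^ k) {x : ZMod n → ℚ_[p]}
    (hx : ∀ j, q * x j - x (j + 1) ∈ Set.range (betaDigit p k)) (j : ZMod n) : ‖x j‖ ≤ 1 := by
  by_cases hq1 : 1 < ‖q‖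
  · refine norm_le_one_of_forall_norm_mul_sub_le (σ := (· + 1)) hq1 (fun j => ?_) j
    obtain ⟨c, hc⟩ := hx j
    rw [← hc, ← max_eq_left hq1.le, hk]
    exact norm_betaDigit_le c
  have hk0 : k = 0 := by
    rw [max_eq_right (not_lt.mp hq1)] at hk
    have : p ^ k = 1 := by exact_mod_cast hk.symm
    exact (Nat.pow_eq_one.mp this).resolve_left (Fact.out : p.Prime).ne_one
  subst hk0
  have hx0 : x = 0 := eq_zero_of_forall_mul_eq_apply_add_one hqn fun j => by
    obtain ⟨c, hc⟩ := hx j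
    rw [betaDigit_zero] at hc
    exact sub_eq_zero.mp hc.symm
  simp [hx0]

theorem card_forall_mul_sub_mem_range_betaDigit (hqn : q ^ n ≠ 1) {k : ℕ}
    (hk : max ‖q‖ 1 = (p : ℝ) ^ k) :
    Nat.card {x : ZMod n → ℤ_[p] // ∀ j, q * x j - x (j + 1) ∈ Set.range (betaDigit p k)} =
      (p ^ k) ^ n := by
  let S := Set.range (betaDigit p k)
  let L (x : {x : ZMod n → ℤ_[p] // ∀ j, q * x j - x (j + 1) ∈ S}) :
      {d : ZMod n → ℚ_[p] // ∀ j, d j ∈ S} := ⟨fun j => q * x.1 j - x.1 (j + 1), x.2⟩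
  have hL : Bijective L := by
    constructor
    · rintro ⟨x, _⟩ ⟨y, _⟩ hxy
      have hz := eq_zero_of_forall_mul_eq_apply_add_one hqn (z := fun j => (x j - y j : ℚ_[p]))
        fun j => by linear_combination congrFun (congrArg Subtype.val hxy) j
      exact Subtype.ext (funext fun j => Subtype.ext (sub_eq_zero.mp (congrFun hz j)))
    · rintro ⟨d, hd⟩
      obtain ⟨x, hx⟩ := exists_forall_mul_sub_apply_add_one_eq hqn d
      have hint := norm_le_one_of_forall_mul_sub_mem_range_betaDigit hqn hk (x := x) (by simpa [hx])
      exact ⟨⟨fun j => ⟨x j, hint j⟩, by simpa [hx]⟩, Subtype.ext (funext hx)⟩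
  rw [Nat.card_eq_of_bijective L hL, Nat.card_congr (Equiv.subtypePiEquivPi), Nat.card_fun,
    Nat.card_range_of_injective (betaDigit_injective k), Nat.card_zmod, Nat.card_fin]

end Padic

open Padic

namespace IsPadicBetaTransform

variable {p : ℕ} [Fact p.Prime] {q : ℚ_[p]} {T : ℤ_[p] → ℤ_[p]}

theorem apply_eq_iff (hT : IsPadicBetaTransform p q T) {k : ℕ} (hq : ‖q‖ ≤ (p : ℝ) ^ k)
    (x y : ℤ_[p]) : T x = y ↔ q * x - y ∈ Set.range (betaDigit p k) := by
  obtain ⟨r, hr, hr0, hr1, hTx⟩ := hT x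
  have hrT : (r : ℚ_[p]) = q * x - T x := by rw [hTx, sub_sub_cancel]
  constructor
  · rintro rfl
    have hnorm : ‖(r : ℚ_[p])‖ ≤ (p : ℝ) ^ k := by
      rw [hrT]
      refine (IsUltrametricDist.norm_sub_le_max _ _).trans (max_le ?_ ?_)
      · exact (norm_mul_le _ _).trans (mul_le_of_le_one_right (norm_nonneg q) x.2) |>.trans hq
      · exact (T x).2.trans (one_le_pow₀ (by exact_mod_cast (Fact.out : p.Prime).one_le))
    obtain ⟨c, rfl⟩ := exists_fin_eq_div_pow_of_norm_le hr hr0 hr1 hnorm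
    exact ⟨c, hrT⟩
  · rintro ⟨c, hc⟩
    have hpk : (0 : ℚ) < (p : ℚ) ^ k := pow_pos (Nat.cast_pos.mpr (Fact.out : p.Prime).pos) k
    have hrc : r = c / p ^ k := by
      refine eq_of_norm_sub_le_one_s3 hr ⟨c, k, by push_cast; rfl⟩ hr0 hr1 (by positivity)
        ((div_lt_one hpk).mpr (by exact_mod_cast c.2)) ?_
      rw [Rat.cast_sub, show ((c / p ^ k : ℚ) : ℚ_[p]) = q * x - y from hc, hrT,
        sub_sub_sub_cancel_left]
      exact (IsUltrametricDist.norm_sub_le_max _ _).trans (max_le y.2 (T x).2)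
    apply Subtype.ext
    rw [hTx, hrc, show ((c / p ^ k : ℚ) : ℚ_[p]) = q * x - y from hc, sub_sub_cancel]

theorem card_periodicPts (hT : IsPadicBetaTransform p q T) {n : ℕ} [NeZero n]
    (hqn : q ^ n ≠ 1) {k : ℕ} (hk : max ‖q‖ 1 = (p : ℝ) ^ k) :
    Nat.card {x // IsPeriodicPt T n x} = (p ^ k) ^ n := by
  rw [Nat.card_congr (periodicPtsEquivCyclicOrbit T n),
    ← card_forall_mul_sub_mem_range_betaDigit hqn hk]
  simp_rw [hT.apply_eq_iff (hk ▸ le_max_left _ _)]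

end IsPadicBetaTransform

/-- If `q ∈ ℚ_p` is not a root of unity, then the set `Per_n(T_q)` of points of
period `n` of the p-adic β-transformation `T_q` is finite, its cardinality equals
`max(|q|_p, 1)^n`, and equivalently `log |Per_n(T_q)| = n · log⁺|q|_p`. -/
theorem card_periodicPts_padic_beta_transform (p : ℕ) [Fact p.Prime] (q : ℚ_[p])
    (hq : ∀ m : ℕ, 0 < m → q ^ m ≠ 1)
    (T : ℤ_[p] → ℤ_[p]) (hT : IsPadicBetaTransform p q T)
    (n : ℕ) (hn : 0 < n) :
    {x : ℤ_[p] | T^[n] x = x}.Finite ∧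
      (Nat.card {x : ℤ_[p] | T^[n] x = x} : ℝ) = (max ‖q‖ 1) ^ n ∧
      Real.log (Nat.card {x : ℤ_[p] | T^[n] x = x}) = n * max (Real.log ‖q‖) 0 := by
  have : NeZero n := ⟨hn.ne'⟩
  obtain ⟨k, hk⟩ := exists_max_norm_one_eq_pow_s3 q
  have hcardNat := hT.card_periodicPts (hq n hn) hk
  have hcard : (Nat.card {x : ℤ_[p] | T^[n] x = x} : ℝ) = (max ‖q‖ 1) ^ n := by
    rw [hk]
    exact_mod_cast hcardNat
  refine ⟨Set.finite_coe_iff.mp (Nat.finite_of_card_ne_zero ?_), hcard, ?_⟩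
  · exact hcardNat.trans_ne (pow_ne_zero _ (pow_ne_zero _ (Fact.out : p.Prime).ne_zero))
  · rw [hcard, Real.log_pow, max_comm (Real.log _), ← Real.posLog_apply,
      Real.posLog_eq_log_max_one (norm_nonneg q), max_comm]
end

section
/- Uniform rigidity and weak mixing are mutually exclusive notions on a Cantor set: if T is a homeomorphism of a Cantor set K (a nonempty compact, totally disconnected, perfect metric space) preserving a Borel probability measure μ that is not a Dirac point mass, and T is weakly mixing with respect to μ (i.e., T × T is ergodic with respect to μ × μ), then T is not uniformly rigid. -/
/-!
If `μ` is not a point mass, two points of its support are separated by a clopen set `A`, so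
`0 < μ A < 1`. Points closer than some `δ > 0` lie on the same side of `A`, hence uniform
rigidity yields `n ≥ 1` with `T⁻ⁿ A = A`. But ergodicity of `T × T` makes `T^n` ergodic: the
pairs `(x, y)` whose `T`-orbits enter `A` at the same times form a `T × T`-invariant set, which
has positive measure because there are only `2^n` possible itineraries, and which misses
`A × Aᶜ`.
-/

open MeasureTheory Filter Set

/-- A self-map `T` of a metric space is uniformly rigid if there is a sequence
`n_k → ∞` with `sup_x d(T^{n_k} x, x) → 0`. -/
def UniformlyRigid {K : Type*} [MetricSpace K] (T : K → K) : Prop :=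
  ∃ u : ℕ → ℕ, StrictMono u ∧
    Filter.Tendsto (fun k => ⨆ x : K, dist (T^[u k] x) x) Filter.atTop (nhds 0)

section Rigidity

variable {K : Type*} [MetricSpace K]

theorem UniformlyRigid.exists_iterate_dist_lt [BoundedSpace K] {T : K → K}
    (hT : UniformlyRigid T) {ε : ℝ} (hε : 0 < ε) : ∃ n ≠ 0, ∀ x, dist (T^[n] x) x < ε := by
  obtain ⟨u, hu, hlim⟩ := hT
  obtain ⟨k, hk, hk1⟩ :=
    ((hlim.eventually (gt_mem_nhds hε)).and (eventually_gt_atTop 0)).exists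
  have hbdd : BddAbove (range fun x => dist (T^[u k] x) x) :=
    ⟨Metric.diam (univ : Set K), forall_mem_range.2 fun x =>
      Metric.dist_le_diam_of_mem (Bornology.isBounded_univ.2 ‹_›) trivial trivial⟩
  exact ⟨u k, (hk1.trans_le hu.le_apply).ne', fun x => (le_ciSup hbdd x).trans_lt hk⟩

theorem IsClopen.exists_pos_forall_dist_lt_mem_iff [CompactSpace K] {A : Set K}
    (hA : IsClopen A) : ∃ δ > 0, ∀ x y, dist x y < δ → (x ∈ A ↔ y ∈ A) := by
  obtain ⟨δ, hδ, hsub⟩ :=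
    hA.isClosed.isCompact.exists_thickening_subset_open hA.isOpen subset_rfl
  have hmem : ∀ x y, dist x y < δ → y ∈ A → x ∈ A := fun x y hxy hy =>
    hsub (Metric.mem_thickening_iff.2 ⟨y, hy, hxy⟩)
  exact ⟨δ, hδ, fun x y hxy => ⟨hmem y x (dist_comm x y ▸ hxy), hmem x y hxy⟩⟩

theorem UniformlyRigid.exists_iterate_preimage_eq [CompactSpace K] {T : K → K}
    (hT : UniformlyRigid T) {A : Set K} (hA : IsClopen A) : ∃ n ≠ 0, T^[n] ⁻¹' A = A := by
  obtain ⟨δ, hδ, hA⟩ := hA.exists_pos_forall_dist_lt_mem_iff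
  obtain ⟨n, hn, hTn⟩ := hT.exists_iterate_dist_lt hδ
  exact ⟨n, hn, ext fun x => hA _ x (hTn x)⟩

end Rigidity

section Itinerary

variable {α : Type*} {f : α → α} {s : Set α} {n : ℕ}

def sameItinerary (f : α → α) (s : Set α) : Set (α × α) :=
  {q | ∀ i, f^[i] q.1 ∈ s ↔ f^[i] q.2 ∈ s}

theorem iterate_add_mem_iff (hs : f^[n] ⁻¹' s = s) (i : ℕ) (x : α) :
    f^[n + i] x ∈ s ↔ f^[i] x ∈ s := by
  rw [Function.iterate_add_apply]
  exact Set.ext_iff.1 hs _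

theorem iterate_mod_mem_iff (hs : f^[n] ⁻¹' s = s) (i : ℕ) (x : α) :
    f^[i % n] x ∈ s ↔ f^[i] x ∈ s := by
  have hmul : ∀ k, f^[n * k + i % n] x ∈ s ↔ f^[i % n] x ∈ s := by
    intro k
    induction k with
    | zero => simp
    | succ k ih => rw [Nat.mul_succ, add_right_comm, add_comm, iterate_add_mem_iff hs, ih]
  rw [← hmul (i / n), Nat.div_add_mod]

theorem preimage_prodMap_sameItinerary (hn : n ≠ 0) (hs : f^[n] ⁻¹' s = s) :
    Prod.map f f ⁻¹' sameItinerary f s = sameItinerary f s := by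
  ext ⟨x, y⟩
  simp only [sameItinerary, mem_preimage, mem_ofPred_eq, Prod.map_apply,
    ← Function.iterate_succ_apply]
  refine ⟨fun h i => ?_, fun h i => h (i + 1)⟩
  have hshift : n - 1 + i + 1 = n + i := by omega
  rw [← iterate_add_mem_iff hs, ← iterate_add_mem_iff hs i y, ← hshift]
  exact h _

theorem measurableSet_sameItinerary [MeasurableSpace α] (hf : Measurable f)
    (hs : MeasurableSet s) : MeasurableSet (sameItinerary f s) := by
  rw [sameItinerary, ofPred_forall]
  exact .iInter fun i => measurableSet_setOfPred.2 <|
    (measurableSet_setOfPred.1 ((hf.iterate i).comp measurable_fst hs)).iff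
      (measurableSet_setOfPred.1 ((hf.iterate i).comp measurable_snd hs))

theorem measure_sameItinerary_ne_zero [MeasurableSpace α] {μ : Measure α} [NeZero μ]
    [SFinite μ] (hn : n ≠ 0) (hs : f^[n] ⁻¹' s = s) : μ.prod μ (sameItinerary f s) ≠ 0 := by
  let itinerary : α → Fin n → Prop := fun x i => f^[i] x ∈ s
  obtain ⟨c, hc⟩ : ∃ c, μ (itinerary ⁻¹' {c}) ≠ 0 := by
    by_contra! h
    refine NeZero.ne μ (Measure.measure_univ_eq_zero.1 ?_)
    rw [← preimage_univ, ← iUnion_of_singleton, preimage_iUnion]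
    exact measure_iUnion_null_iff.2 h
  have hsub : (itinerary ⁻¹' {c}) ×ˢ (itinerary ⁻¹' {c}) ⊆ sameItinerary f s := by
    rintro ⟨x, y⟩ ⟨hx, hy⟩ i
    have := congrFun (hx.trans hy.symm) ⟨i % n, Nat.mod_lt i (Nat.pos_of_ne_zero hn)⟩
    rw [← iterate_mod_mem_iff hs, ← iterate_mod_mem_iff hs i y]
    exact iff_of_eq this
  refine fun h0 => mul_ne_zero hc hc ?_
  rw [← Measure.prod_prod]
  exact measure_mono_null hsub h0

theorem PreErgodic.measure_self_or_compl_eq_zero_of_iterate [MeasurableSpace α]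
    {μ : Measure α} [SFinite μ] (h : PreErgodic (Prod.map f f) (μ.prod μ)) (hf : Measurable f)
    (hsm : MeasurableSet s) (hn : n ≠ 0) (hs : f^[n] ⁻¹' s = s) : μ s = 0 ∨ μ sᶜ = 0 := by
  by_contra! hpos
  obtain ⟨hs0, hsc0⟩ := hpos
  have : NeZero μ := ⟨fun hμ => hs0 (by simp [hμ])⟩
  have hcompl : μ.prod μ (sameItinerary f s)ᶜ ≠ 0 := by
    have hsub : s ×ˢ sᶜ ⊆ (sameItinerary f s)ᶜ := fun q hq hsame => hq.2 ((hsame 0).1 hq.1)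
    refine fun h0 => mul_ne_zero hs0 hsc0 ?_
    rw [← Measure.prod_prod]
    exact measure_mono_null hsub h0
  rcases h.measure_self_or_compl_eq_zero (measurableSet_sameItinerary hf hsm)
    (preimage_prodMap_sameItinerary hn hs) with h0 | h0
  exacts [measure_sameItinerary_ne_zero hn hs h0, hcompl h0]

end Itinerary

namespace MeasureTheory.Measure

variable {X : Type*} [TopologicalSpace X] [MeasurableSpace X] {μ : Measure X}

theorem exists_mem_support_ne_of_ne_dirac [HereditarilyLindelofSpace X]
    [MeasurableSingletonClass X] [IsProbabilityMeasure μ] (hμ : ∀ x, μ ≠ dirac x) :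
    ∃ x ∈ μ.support, ∃ y ∈ μ.support, x ≠ y := by
  obtain ⟨x, hx⟩ := nonempty_support (IsProbabilityMeasure.ne_zero μ)
  by_contra! hsupp
  have hxc : μ {x}ᶜ = 0 :=
    measure_mono_null (fun y hy hys => hy (hsupp x hx y hys).symm) measure_compl_support
  refine hμ x ?_
  rw [← restrict_eq_self_of_ae_mem (s := {x}) (mem_ae_iff.2 hxc),
    restrict_singleton, (prob_compl_eq_zero_iff (measurableSet_singleton x)).1 hxc,
    one_smul]

theorem exists_isClopen_measure_ne_zero_compl [TotallySeparatedSpace X]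
    {x y : X} (hx : x ∈ μ.support) (hy : y ∈ μ.support) (hxy : x ≠ y) :
    ∃ A, IsClopen A ∧ μ A ≠ 0 ∧ μ Aᶜ ≠ 0 := by
  obtain ⟨A, hA, hxA, hyA⟩ := exists_isClopen_of_totally_separated hxy
  exact ⟨A, hA, ((mem_support_iff_forall x).1 hx A (hA.isOpen.mem_nhds hxA)).ne',
    ((mem_support_iff_forall y).1 hy _ (hA.compl.isOpen.mem_nhds hyA)).ne'⟩

end MeasureTheory.Measure

theorem weakMixing_not_uniformlyRigid_on_cantor_general
    {K : Type*} [MetricSpace K] [CompactSpace K]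
    [TotallyDisconnectedSpace K]
    [MeasurableSpace K] [BorelSpace K]
    (T : K ≃ₜ K) (μ : Measure K) [IsProbabilityMeasure μ]
    (hdirac : ∀ x : K, μ ≠ Measure.dirac x)
    (hwm : Ergodic (fun q : K × K => (T q.1, T q.2)) (μ.prod μ)) :
    ¬ UniformlyRigid (T : K → K) := by
  intro hrigid
  obtain ⟨x, hx, y, hy, hxy⟩ := Measure.exists_mem_support_ne_of_ne_dirac hdirac
  obtain ⟨A, hA, hA0, hAc0⟩ := Measure.exists_isClopen_measure_ne_zero_compl hx hy hxy
  obtain ⟨n, hn, hAinv⟩ := hrigid.exists_iterate_preimage_eq hA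
  rcases hwm.toPreErgodic.measure_self_or_compl_eq_zero_of_iterate T.continuous.measurable
    hA.isClosed.measurableSet hn hAinv with h | h
  exacts [hA0 h, hAc0 h]

/-- Uniform rigidity and weak mixing are mutually exclusive on a Cantor set:
a weakly mixing measure-preserving homeomorphism of a Cantor set (with respect to a
Borel probability measure which is not a Dirac point mass) is not uniformly rigid. -/
theorem weakMixing_not_uniformlyRigid_on_cantor
    {K : Type*} [MetricSpace K] [CompactSpace K] [Nonempty K]
    [TotallyDisconnectedSpace K] (hperf : Perfect (Set.univ : Set K))
    [MeasurableSpace K] [BorelSpace K]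
    (T : K ≃ₜ K) (μ : Measure K) [IsProbabilityMeasure μ]
    (hpres : MeasurePreserving T μ μ)
    (hdirac : ∀ x : K, μ ≠ Measure.dirac x)
    (hwm : Ergodic (fun q : K × K => (T q.1, T q.2)) (μ.prod μ)) :
    ¬ UniformlyRigid (T : K → K) :=
  weakMixing_not_uniformlyRigid_on_cantor_general T μ hdirac hwm
end

section
/- Let p be an odd prime and f(x) = x³ + c·x + d ∈ 𝔽_p[x] a cubic polynomial whose discriminant −16(4c³ + 27d²) is zero in 𝔽_p (so the curve y² = f(x) is not an elliptic curve). Then a_p = −Σ_{x ∈ 𝔽_p} (f(x)/p) equals 1, −1, or 0. -/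
/-!
A vanishing discriminant means `f = (x - r)² (x + 2r)` for some `r ∈ 𝔽_p` (in characteristic 3
`r` is a cube root of `-d`, which exists because Frobenius is bijective). Away from `x = r` the
square factor does not change the Legendre symbol, and `Σ_x ((x + 2r)/p) = 0`, so
`Σ_x (f(x)/p) = -(3r/p)`.
-/

section DoubleRoot

variable {F : Type*} [Field F]

theorem cubic_eq_sq_mul {c d r : F} (hc : -3 * r ^ 2 = c) (hd : 2 * r ^ 3 = d) (x : F) :
    x ^ 3 + c * x + d = (x - r) ^ 2 * (x + 2 * r) := by
  subst hc hd; ring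

theorem exists_double_root_of_disc_eq_zero [Finite F] (h2 : (2 : F) ≠ 0) {c d : F}
    (hdisc : 4 * c ^ 3 + 27 * d ^ 2 = 0) : ∃ r : F, -3 * r ^ 2 = c ∧ 2 * r ^ 3 = d := by
  by_cases hc : c = 0
  · subst hc
    by_cases h3 : (3 : F) = 0
    · have : CharP F 3 := (CharP.charP_iff_prime_eq_zero Nat.prime_three).2 (by exact_mod_cast h3)
      obtain ⟨r, hr⟩ := surjective_frobenius F 3 (-d)
      rw [frobenius_def] at hr
      exact ⟨r, by simp [h3], by linear_combination 2 * hr - d * h3⟩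
    · have hd : d = 0 := by
        have : (3 : F) ^ 3 * d ^ 2 = 0 := by linear_combination hdisc
        simpa [h3] using this
      exact ⟨0, by simp, by simp [hd]⟩
  · refine ⟨-3 * d / (2 * c), ?_, ?_⟩ <;> field_simp
    · linear_combination -hdisc
    · linear_combination -d * hdisc

end DoubleRoot

theorem sum_quadraticChar_sq_mul {F : Type*} [Field F] [Fintype F] [DecidableEq F]
    (hF : ringChar F ≠ 2) (r s : F) :
    ∑ x : F, quadraticChar F ((x - r) ^ 2 * (x + s)) = -quadraticChar F (r + s) := by
  have hshift : ∑ x : F, quadraticChar F (x + s) = 0 := by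
    rw [← quadraticChar_sum_zero hF]
    exact Fintype.sum_equiv (Equiv.addRight s) _ _ fun _ => rfl
  have hterm (x : F) : quadraticChar F ((x - r) ^ 2 * (x + s)) =
      quadraticChar F (x + s) - if x = r then quadraticChar F (r + s) else 0 := by
    by_cases hx : x = r
    · subst hx; simp
    · rw [if_neg hx, map_mul, quadraticChar_sq_one' (sub_ne_zero.mpr hx), one_mul, sub_zero]
  simp only [hterm, Finset.sum_sub_distrib, hshift, Finset.sum_ite_eq', Finset.mem_univ, if_true,
    zero_sub]

/-- For an odd prime `p` and a cubic `f(x) = x³ + c·x + d` over `𝔽_p` with vanishing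
discriminant `−16(4c³ + 27d²) = 0` (so `y² = f(x)` is not an elliptic curve), the
quantity `a_p = −Σ_x (f(x)/p)` equals `1`, `−1` or `0`. -/
theorem ap_singular_weierstrass (p : ℕ) [Fact p.Prime] (hodd : p ≠ 2) (c d : ZMod p)
    (hdisc : (-16 : ZMod p) * (4 * c ^ 3 + 27 * d ^ 2) = 0) :
    (- ∑ x : ZMod p, quadraticChar (ZMod p) (x ^ 3 + c * x + d) : ℤ) = 1 ∨
    (- ∑ x : ZMod p, quadraticChar (ZMod p) (x ^ 3 + c * x + d) : ℤ) = -1 ∨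
    (- ∑ x : ZMod p, quadraticChar (ZMod p) (x ^ 3 + c * x + d) : ℤ) = 0 := by
  have hchar : ringChar (ZMod p) ≠ 2 := by rwa [ZMod.ringChar_zmod_n]
  have h2 : (2 : ZMod p) ≠ 0 := Ring.two_ne_zero hchar
  have hdisc' : 4 * c ^ 3 + 27 * d ^ 2 = 0 := by
    have h16 : (-16 : ZMod p) ≠ 0 := by
      rw [show (-16 : ZMod p) = -2 ^ 4 by norm_num]
      exact neg_ne_zero.mpr (pow_ne_zero 4 h2)
    exact (mul_eq_zero.mp hdisc).resolve_left h16
  obtain ⟨r, hc, hd⟩ := exists_double_root_of_disc_eq_zero h2 hdisc'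
  simp only [cubic_eq_sq_mul hc hd, sum_quadraticChar_sq_mul hchar, neg_neg]
  rcases quadraticChar_isQuadratic (ZMod p) (r + 2 * r) with h | h | h <;> simp [h]
end

section
/- (Furstenberg's ×p,×q theorem) Let a, b ≥ 2 be multiplicatively independent integers (i.e., a^m = b^n with m, n ≥ 0 implies m = n = 0). If S ⊆ ℝ/ℤ is a closed subset invariant under both x ↦ a·x and x ↦ b·x, then S is finite or S = ℝ/ℤ. -/
/-!
Let `Σ` be the semigroup generated by `a` and `b`. Since `log a / log b` is irrational, `Σ` is
nonlacunary: for every `c > 1`, every large `t` lies below some `σ ∈ Σ` with `σ ≤ c t`. So if `0`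
is an accumulation point of a closed `Σ`-invariant set `Y`, the multiples `σ w` of the points
`w ∈ Y` near `0` come within any `ε` of every point, and `Y` is the whole circle. In particular
`Y - Y` is the whole circle for every infinite closed invariant `Y`.

Let `S` be infinite and let `S'` be its set of accumulation points, again closed and invariant.
Suppose `S'` has no point of finite order. For `N` coprime to `ab`, the point `q = 1/N` is fixed
by `a^φ(N)` and `b^φ(N)`, so the sets `{x | x + i q ∈ S' for i ≤ j}` are closed, invariant and
infinite, and each is nonempty because the previous one meets its translate by `-q`. Hence `S'`
meets every coset of `⟨1/N⟩`, is dense, and contains `0`: a contradiction. So `S'` contains a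
rational point, which after multiplication by powers of `a` and `b` is fixed by `a^e` and `b^e`;
translating it to `0` shows that `S` is the whole circle.
-/

open Set Filter Topology
open scoped Pointwise

/-- The quantitative form of Furstenberg's nonlacunarity (`M` is not contained in the powers of a
single integer): ratios of consecutive elements of `M` tend to `1`. -/
def Submonoid.IsNonlacunary (M : Submonoid ℕ) : Prop :=
  ∀ c > (1 : ℝ), ∃ N₀ : ℝ, ∀ t ≥ N₀, ∃ σ ∈ M, t ≤ σ ∧ (σ : ℝ) ≤ c * t

namespace Submonoid.IsNonlacunary

variable {M : Submonoid ℕ}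

theorem mono {M' : Submonoid ℕ} (hM : M.IsNonlacunary) (h : M ≤ M') : M'.IsNonlacunary := by
  intro c hc
  obtain ⟨N₀, hN₀⟩ := hM c hc
  exact ⟨N₀, fun t ht => let ⟨σ, hσ, h₁, h₂⟩ := hN₀ t ht; ⟨σ, h hσ, h₁, h₂⟩⟩

theorem exists_two_le (hM : M.IsNonlacunary) : ∃ σ ∈ M, 2 ≤ σ := by
  obtain ⟨N₀, hN₀⟩ := hM 2 one_lt_two
  obtain ⟨σ, hσ, h₁, -⟩ := hN₀ (max N₀ 2) (le_max_left _ _)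
  exact ⟨σ, hσ, by exact_mod_cast (le_max_right _ _).trans h₁⟩

theorem exists_abs_mul_sub_lt (hM : M.IsNonlacunary) {ε : ℝ} (hε : 0 < ε) :
    ∃ η > 0, ∀ r : ℝ, r ≠ 0 → |r| < η → ∀ x : ℝ, ∃ σ ∈ M, ∃ k : ℤ, |σ * r - (x + k)| < ε := by
  obtain ⟨N₀, hN₀⟩ := hM (1 + ε / 2) (by linarith)
  set N := max N₀ 1
  have hN : 0 < N := lt_of_lt_of_le one_pos (le_max_right _ _)
  have hpos : ∀ r, 0 < r → r < ε / N → ∀ τ ∈ Ico (0 : ℝ) 1, ∃ σ ∈ M, |σ * r - τ| < ε := by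
    intro r hr hrε τ ⟨hτ₀, hτ₁⟩
    have hNr : N * r < ε := by rwa [lt_div_iff₀' hN] at hrε
    rcases lt_or_ge τ (N * r) with hτ | hτ
    · have : r ≤ N * r := le_mul_of_one_le_left hr.le (le_max_right _ _)
      exact ⟨1, one_mem M, by rw [Nat.cast_one, one_mul, abs_sub_lt_iff]; constructor <;> linarith⟩
    · obtain ⟨σ, hσ, h₁, h₂⟩ := hN₀ (τ / r) ((le_max_left _ _).trans ((le_div_iff₀ hr).2 hτ))
      refine ⟨σ, hσ, abs_sub_lt_iff.2 ⟨?_, ?_⟩⟩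
      · have : (σ : ℝ) * r ≤ (1 + ε / 2) * τ := by
          rwa [← mul_div_assoc, le_div_iff₀ hr] at h₂
        nlinarith
      · have : τ ≤ σ * r := by rwa [div_le_iff₀ hr] at h₁
        linarith
  refine ⟨ε / N, by positivity, fun r hr₀ hrη x => ?_⟩
  rcases hr₀.lt_or_gt with hr | hr
  · obtain ⟨σ, hσ, h⟩ := hpos (-r) (by linarith) (by rwa [abs_of_neg hr] at hrη) (Int.fract (-x))
      ⟨Int.fract_nonneg _, Int.fract_lt_one _⟩
    refine ⟨σ, hσ, ⌊-x⌋, ?_⟩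
    rw [Int.fract] at h
    rw [← abs_neg]
    convert h using 2
    ring
  · obtain ⟨σ, hσ, h⟩ := hpos r hr (by rwa [abs_of_pos hr] at hrη) (Int.fract x)
      ⟨Int.fract_nonneg _, Int.fract_lt_one _⟩
    refine ⟨σ, hσ, -⌊x⌋, ?_⟩
    rw [Int.fract] at h
    convert h using 2
    push_cast
    ring

end Submonoid.IsNonlacunary

/-- The elements `N u + k (v - u)`, `k ≤ N`, step through `[y, y + ε]`. -/
theorem AddSubmonoid.exists_forall_ge_exists_mem_Icc {M : AddSubmonoid ℝ} {u v ε : ℝ}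
    (hu : u ∈ M) (hv : v ∈ M) (hu₀ : 0 < u) (huv : u < v) (hvε : v ≤ u + ε) :
    ∃ L, ∀ y ≥ L, ∃ s ∈ M, s ∈ Icc y (y + ε) := by
  set g := v - u
  have hg : 0 < g := sub_pos.2 huv
  set K := ⌈u / g⌉₊
  refine ⟨K * u, fun y hy => ?_⟩
  have hy₀ : 0 ≤ y := le_trans (by positivity) hy
  set N := ⌊y / u⌋₊
  set r := y - N * u
  have hNy : (N : ℝ) * u ≤ y := (le_div_iff₀ hu₀).1 (Nat.floor_le (by positivity))
  have hyN : y < (N + 1) * u := (div_lt_iff₀ hu₀).1 (Nat.lt_floor_add_one _)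
  set k := ⌈r / g⌉₊
  have hkr : r ≤ k * g := (div_le_iff₀ hg).1 (Nat.le_ceil _)
  have hrk : k * g < r + g := by
    have := Nat.ceil_lt_add_one (div_nonneg (sub_nonneg.2 hNy) hg.le)
    rw [← sub_lt_iff_lt_add, ← sub_one_mul]; exact (lt_div_iff₀ hg).1 (by linarith)
  have hkN : k ≤ N := by
    refine (Nat.ceil_mono (div_le_div_of_nonneg_right (show r ≤ u by linarith) hg.le)).trans ?_
    exact Nat.le_floor ((le_div_iff₀ hu₀).2 hy)
  refine ⟨(N - k) • u + k • v, add_mem (nsmul_mem hu _) (nsmul_mem hv _), ?_, ?_⟩ <;>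
  · simp only [nsmul_eq_mul, Nat.cast_sub hkN]
    nlinarith

theorem exists_forall_ge_exists_mem_closure_pair_Icc {α β : ℝ} (hα : 0 < α) (hβ : 0 ≤ β)
    (hαβ : Irrational (α / β)) {ε : ℝ} (hε : 0 < ε) :
    ∃ L, ∀ y ≥ L, ∃ s ∈ AddSubmonoid.closure {α, β}, s ∈ Icc y (y + ε) := by
  set M := AddSubmonoid.closure {α, β}
  have hM₀ : ∀ x ∈ M, 0 ≤ x := fun x hx => by
    induction hx using AddSubmonoid.closure_induction with
    | mem x hx => rcases hx with rfl | rfl <;> positivity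
    | zero => exact le_rfl
    | add _ _ _ _ hx hy => exact add_nonneg hx hy
  have hM_sub : ∀ g ∈ AddSubgroup.closure {α, β}, ∃ u ∈ M, ∃ v ∈ M, v - u = g := fun g hg => by
    induction hg using AddSubgroup.closure_induction with
    | mem x hx => exact ⟨0, zero_mem _, x, AddSubmonoid.subset_closure hx, sub_zero x⟩
    | zero => exact ⟨0, zero_mem _, 0, zero_mem _, sub_zero 0⟩
    | add _ _ _ _ hx hy =>
      obtain ⟨u₁, hu₁, v₁, hv₁, rfl⟩ := hx
      obtain ⟨u₂, hu₂, v₂, hv₂, rfl⟩ := hy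
      exact ⟨u₁ + u₂, add_mem hu₁ hu₂, v₁ + v₂, add_mem hv₁ hv₂, by ring⟩
    | neg _ _ hx =>
      obtain ⟨u, hu, v, hv, rfl⟩ := hx
      exact ⟨v, hv, u, hu, by ring⟩
  obtain ⟨g, hg, hg₀, hgε⟩ := (dense_addSubgroupClosure_pair_iff.2 hαβ).exists_between hε
  obtain ⟨u, hu, v, hv, rfl⟩ := hM_sub g hg
  have hαM : α ∈ M := AddSubmonoid.subset_closure (mem_insert α _)
  exact AddSubmonoid.exists_forall_ge_exists_mem_Icc (add_mem hu hαM) (add_mem hv hαM)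
    (by linarith [hM₀ u hu]) (by linarith) (by linarith)

theorem irrational_log_div_log {a b : ℕ} (ha : 1 < a) (hb : 1 < b)
    (hind : ∀ m n : ℕ, a ^ m = b ^ n → m = 0 ∧ n = 0) :
    Irrational (Real.log a / Real.log b) := by
  rintro ⟨q, hq⟩
  have hla : 0 < Real.log a := Real.log_pos (by exact_mod_cast ha)
  have hlb : 0 < Real.log b := Real.log_pos (by exact_mod_cast hb)
  have hnum : 0 < q.num := Rat.num_pos.2 (by exact_mod_cast hq ▸ div_pos hla hlb)
  have hlog : (q.den : ℝ) * Real.log a = (q.num.toNat : ℝ) * Real.log b := by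
    have := Rat.cast_def (K := ℝ) q
    rw [hq, div_eq_div_iff hlb.ne' (by positivity)] at this
    rw [show ((q.num.toNat : ℕ) : ℝ) = (q.num : ℝ) by exact_mod_cast Int.toNat_of_nonneg hnum.le]
    linarith
  have hpow : a ^ q.den = b ^ q.num.toNat := by
    have ha₀ : (0 : ℝ) < a := by positivity
    have hb₀ : (0 : ℝ) < b := by positivity
    rw [← Real.log_pow, ← Real.log_pow] at hlog
    exact_mod_cast Real.log_injOn_pos (pow_pos ha₀ _) (pow_pos hb₀ _) hlog
  exact q.den_nz (hind _ _ hpow).1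

theorem Submonoid.isNonlacunary_closure_pair {a b : ℕ} (ha : 1 < a) (hb : 1 < b)
    (hind : ∀ m n : ℕ, a ^ m = b ^ n → m = 0 ∧ n = 0) :
    (Submonoid.closure {a, b}).IsNonlacunary := by
  intro c hc
  have ha₀ : (0 : ℝ) < a := by positivity
  have hb₀ : (0 : ℝ) < b := by positivity
  obtain ⟨L, hL⟩ := exists_forall_ge_exists_mem_closure_pair_Icc
    (Real.log_pos (by exact_mod_cast ha)) (Real.log_nonneg (by exact_mod_cast hb.le))
    (irrational_log_div_log ha hb hind) (Real.log_pos hc)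
  refine ⟨Real.exp L, fun t ht => ?_⟩
  have ht₀ : 0 < t := (Real.exp_pos L).trans_le ht
  obtain ⟨s, hs, hts, hst⟩ := hL (Real.log t) ((Real.le_log_iff_exp_le ht₀).2 ht)
  obtain ⟨m, n, rfl⟩ := (AddSubmonoid.mem_closure_pair _ _ _).1 hs
  have hσ : Real.log ((a ^ m * b ^ n : ℕ) : ℝ) = m • Real.log a + n • Real.log b := by
    push_cast
    rw [Real.log_mul (by positivity) (by positivity), Real.log_pow, Real.log_pow, nsmul_eq_mul,
      nsmul_eq_mul]
  refine ⟨a ^ m * b ^ n, (Submonoid.mem_closure_pair _ _ _).2 ⟨m, n, rfl⟩, ?_, ?_⟩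
  · rwa [← Real.log_le_log_iff ht₀ (by positivity), hσ]
  · rw [← Real.log_le_log_iff (by positivity) (by positivity), hσ,
      Real.log_mul (by positivity) ht₀.ne']
    linarith

theorem Submonoid.isNonlacunary_closure_pow_pair {a b : ℕ} (ha : 1 < a) (hb : 1 < b)
    (hind : ∀ m n : ℕ, a ^ m = b ^ n → m = 0 ∧ n = 0) {e : ℕ} (he : e ≠ 0) :
    (Submonoid.closure {a ^ e, b ^ e}).IsNonlacunary := by
  refine isNonlacunary_closure_pair (Nat.one_lt_pow he ha) (Nat.one_lt_pow he hb) fun m n h => ?_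
  rw [← pow_mul, ← pow_mul] at h
  simpa [he] using hind _ _ h

/-- `M ≤ invariantMultipliers Y` says that `σ • Y ⊆ Y` for all `σ ∈ M`; for `Y = {x}` it says
that every `σ ∈ M` fixes `x`. -/
def invariantMultipliers {G : Type*} [AddMonoid G] (Y : Set G) : Submonoid ℕ where
  carrier := {n | ∀ y ∈ Y, n • y ∈ Y}
  one_mem' y hy := by rwa [one_nsmul]
  mul_mem' hm hn y hy := by rw [mul_nsmul']; exact hm _ (hn y hy)

theorem mem_invariantMultipliers_singleton {G : Type*} [AddMonoid G] {n : ℕ} {x : G} :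
    n ∈ invariantMultipliers {x} ↔ n • x = x := by
  simp [invariantMultipliers]

theorem mem_invariantMultipliers_singleton_nsmul {G : Type*} [AddMonoid G] {m : ℕ} {x : G}
    (h : m ∈ invariantMultipliers {x}) (k : ℕ) : m ∈ invariantMultipliers {k • x} := by
  simp only [invariantMultipliers, Submonoid.mem_mk, Subsemigroup.mem_mk, mem_ofPred_eq,
    mem_singleton_iff, forall_eq] at h ⊢
  rw [smul_comm, h]

theorem infinite_of_mem_invariantMultipliers {G : Type*} [AddGroup G] {V : Set G} (hV : V.Nonempty)
    (htor : ∀ x ∈ V, ¬ IsOfFinAddOrder x) {n : ℕ} (hn : 1 < n) (hnV : n ∈ invariantMultipliers V) :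
    V.Infinite := by
  intro hfin
  obtain ⟨x, hx⟩ := hV
  obtain ⟨i, j, hij, hx_eq⟩ :=
    hfin.exists_lt_map_eq_of_forall_mem (f := fun k => n ^ k • x) fun k => pow_mem hnV k x hx
  have hpow : n ^ i < n ^ j := Nat.pow_lt_pow_right hn hij
  refine htor x hx (isOfFinAddOrder_iff_nsmul_eq_zero.2 ⟨n ^ j - n ^ i, Nat.sub_pos_of_lt hpow, ?_⟩)
  have : (n ^ j - n ^ i) • x + n ^ i • x = n ^ i • x := by
    rw [← add_nsmul, Nat.sub_add_cancel hpow.le, ← hx_eq]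
  simpa using this

theorem nsmul_eq_self_of_modEq {G : Type*} [AddMonoid G] {N σ : ℕ} {q : G} (hq : N • q = 0)
    (hσ : σ ≡ 1 [MOD N]) : σ • q = q := by
  rw [nsmul_eq_mod_nsmul σ hq, hσ, ← nsmul_eq_mod_nsmul 1 hq, one_nsmul]

theorem mem_derivedSet_image_of_finite_fiber {X Y : Type*} [TopologicalSpace X] [T1Space X]
    [TopologicalSpace Y] {f : X → Y} {x : X} {C : Set X} (hf : ContinuousAt f x)
    (hfib : (f ⁻¹' {f x}).Finite) (hx : x ∈ derivedSet C) : f x ∈ derivedSet (f '' C) := by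
  rw [mem_derivedSet, accPt_iff_frequently_nhdsNE] at hx ⊢
  have hne : ∀ᶠ y in 𝓝[≠] x, f y ∈ ({f x}ᶜ : Set Y) := by
    have : (f ⁻¹' {f x} \ {x})ᶜ ∈ 𝓝 x :=
      (hfib.sdiff.isClosed.isOpen_compl).mem_nhds fun h => h.2 rfl
    filter_upwards [nhdsWithin_le_nhds this, self_mem_nhdsWithin] with y hy hyx
    exact fun h => hy ⟨h, hyx⟩
  exact (tendsto_nhdsWithin_of_tendsto_nhds_of_eventually_within f
    (hf.tendsto.mono_left nhdsWithin_le_nhds) hne).frequently (hx.mono fun y => mem_image_of_mem f)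

namespace UnitAddCircle

theorem exists_coe_eq_abs_eq_norm (w : UnitAddCircle) :
    ∃ r : ℝ, (r : UnitAddCircle) = w ∧ |r| = ‖w‖ := by
  obtain ⟨x, rfl⟩ := QuotientAddGroup.mk_surjective w
  refine ⟨x - round x, ?_, norm_eq.symm⟩
  rw [AddCircle.coe_sub]
  simp

theorem norm_coe_le_abs (r : ℝ) : ‖(r : UnitAddCircle)‖ ≤ |r| := by
  simpa [norm_eq] using round_le r 0

theorem finite_preimage_nsmul_singleton {n : ℕ} (hn : 0 < n) (x : UnitAddCircle) :
    ((n • ·) ⁻¹' {n • x} : Set UnitAddCircle).Finite := by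
  have h := (AddCircle.finite_torsion (1 : ℝ) hn).preimage (f := (· - x))
    (sub_left_injective.injOn)
  convert h using 1
  ext y
  simp [nsmul_sub, sub_eq_zero]

variable {Y : Set UnitAddCircle}

theorem mem_invariantMultipliers_derivedSet {n : ℕ} (hn : 0 < n)
    (h : n ∈ invariantMultipliers Y) : n ∈ invariantMultipliers (derivedSet Y) := fun x hx =>
  derivedSet_mono _ _ (image_subset_iff.2 h)
    (mem_derivedSet_image_of_finite_fiber (continuous_nsmul n).continuousAt
      (finite_preimage_nsmul_singleton hn x) hx)

theorem dense_of_zero_mem_derivedSet (hY : (invariantMultipliers Y).IsNonlacunary)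
    (h₀ : 0 ∈ derivedSet Y) : Dense Y := by
  refine Metric.dense_iff.2 fun u ε hε => ?_
  obtain ⟨x, rfl⟩ := QuotientAddGroup.mk_surjective u
  obtain ⟨η, hη, hη_approx⟩ := hY.exists_abs_mul_sub_lt hε
  obtain ⟨w, ⟨hwη, hwY⟩, hw₀⟩ := accPt_iff_nhds.1 h₀ _ (Metric.ball_mem_nhds 0 hη)
  obtain ⟨r, rfl, hr⟩ := exists_coe_eq_abs_eq_norm w
  rw [mem_ball_zero_iff, ← hr] at hwη
  obtain ⟨σ, hσ, k, hk⟩ := hη_approx r (fun h => hw₀ (by simp [h])) hwη x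
  refine ⟨σ • (r : UnitAddCircle), ?_, hσ _ hwY⟩
  rw [Metric.mem_ball, dist_eq_norm]
  calc ‖σ • (r : UnitAddCircle) - x‖ = ‖((σ * r - (x + k) : ℝ) : UnitAddCircle)‖ := by
        rw [AddCircle.coe_sub, AddCircle.coe_add, ← nsmul_eq_mul, AddCircle.coe_nsmul]
        rw [show ((k : ℝ) : UnitAddCircle) = 0 by simp, add_zero]
    _ ≤ |σ * r - (x + k)| := norm_coe_le_abs _
    _ < ε := hk

theorem eq_univ_of_zero_mem_derivedSet (hYc : IsClosed Y)
    (hY : (invariantMultipliers Y).IsNonlacunary) (h₀ : 0 ∈ derivedSet Y) : Y = univ := by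
  rw [← hYc.closure_eq, (dense_of_zero_mem_derivedSet hY h₀).closure_eq]

theorem sub_self_eq_univ (hYc : IsClosed Y) (hY : (invariantMultipliers Y).IsNonlacunary)
    (hinf : Y.Infinite) : Y - Y = univ := by
  refine eq_univ_of_zero_mem_derivedSet ?_ (hY.mono fun n hn _ ⟨y, hy, z, hz, hyz⟩ => ?_) ?_
  · rw [← image2_sub, ← image_prod]
    exact ((hYc.isCompact.prod hYc.isCompact).image continuous_sub).isClosed
  · exact ⟨n • y, hn y hy, n • z, hn z hz, by rw [← hyz, nsmul_sub]⟩
  · obtain ⟨z, hz⟩ := hinf.exists_accPt_principal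
    have hzY : z ∈ Y := (isClosed_iff_derivedSet_subset Y).1 hYc hz
    have := (continuous_add_const (-z)).image_derivedSet (add_left_injective (-z)) ⟨z, hz, rfl⟩
    simp only [add_neg_cancel] at this
    refine derivedSet_mono _ (Y - Y) (image_subset_iff.2 fun y hy => ?_) this
    simpa [← sub_eq_add_neg] using sub_mem_sub hy hzY

theorem eq_univ_of_fixed_mem_derivedSet (hYc : IsClosed Y) {M : Submonoid ℕ}
    (hM : M.IsNonlacunary) (hMY : M ≤ invariantMultipliers Y) {x : UnitAddCircle}
    (hx : x ∈ derivedSet Y) (hfix : M ≤ invariantMultipliers {x}) : Y = univ := by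
  have htr : (· + x) ⁻¹' Y = univ := by
    refine eq_univ_of_zero_mem_derivedSet (hYc.preimage (continuous_add_const x))
      (hM.mono fun σ hσ y hy => ?_) ?_
    · rw [mem_preimage, ← mem_invariantMultipliers_singleton.1 (hfix hσ), ← nsmul_add]
      exact hMY hσ _ hy
    · have := (continuous_add_const (-x)).image_derivedSet (add_left_injective (-x)) ⟨x, hx, rfl⟩
      simpa only [add_neg_cancel, image_add_right, neg_neg] using this
  exact eq_univ_of_forall fun y => by simpa using eq_univ_iff_forall.1 htr (y - x)

theorem exists_forall_add_nsmul_mem (hYc : IsClosed Y) (hYne : Y.Nonempty)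
    (htor : ∀ x ∈ Y, ¬ IsOfFinAddOrder x) {M : Submonoid ℕ} (hM : M.IsNonlacunary)
    (hMY : M ≤ invariantMultipliers Y) {q : UnitAddCircle} (hq : M ≤ invariantMultipliers {q})
    (j : ℕ) : ∃ x, ∀ i ≤ j, x + i • q ∈ Y := by
  induction j with
  | zero =>
    obtain ⟨x, hx⟩ := hYne
    exact ⟨x, fun i hi => by simpa [Nat.le_zero.1 hi] using hx⟩
  | succ j ih =>
    set V := {x | ∀ i ≤ j, x + i • q ∈ Y}
    have hVc : IsClosed V := by
      simp only [V, ofPred_forall]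
      exact isClosed_iInter fun i => isClosed_iInter fun _ =>
        hYc.preimage (continuous_add_const _)
    have hMV : M ≤ invariantMultipliers V := fun σ hσ x hx i hi => by
      rw [← mem_invariantMultipliers_singleton.1 (hq hσ), smul_comm, ← nsmul_add]
      exact hMY hσ _ (hx i hi)
    obtain ⟨n, hnM, hn⟩ := hM.exists_two_le
    have hVinf : V.Infinite := infinite_of_mem_invariantMultipliers ih
      (fun x hx => htor _ (by simpa using hx 0 (Nat.zero_le j))) hn (hMV hnM)
    obtain ⟨y, hy, x, hx, hyx⟩ : q ∈ V - V :=
      (sub_self_eq_univ hVc (hM.mono hMV) hVinf).symm ▸ mem_univ q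
    replace hyx : y - x = q := hyx
    refine ⟨x, fun i hi => ?_⟩
    rcases i with _ | i
    · exact hx 0 (Nat.zero_le j)
    · rw [succ_nsmul', ← add_assoc, show x + q = y by rw [← hyx, add_sub_cancel]]
      exact hy i (by omega)

theorem dense_of_frequently_exists_forall_add_nsmul_mem
    (h : ∃ᶠ N : ℕ in atTop, ∃ x, ∀ i ≤ N, x + i • (((N : ℝ)⁻¹ : ℝ) : UnitAddCircle) ∈ Y) :
    Dense Y := by
  refine Metric.dense_iff.2 fun u ε hε => ?_
  obtain ⟨N, hN, x, hx⟩ := frequently_atTop.1 h (⌈ε⁻¹⌉₊ + 1)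
  have hNε : (N : ℝ)⁻¹ < ε := by
    have : ε⁻¹ < N := (Nat.le_ceil _).trans_lt (by exact_mod_cast Nat.lt_of_succ_le hN)
    exact inv_lt_of_inv_lt₀ hε this
  have hN₀ : (0 : ℝ) < N := Nat.cast_pos.2 (by omega)
  obtain ⟨t, ht⟩ := QuotientAddGroup.mk_surjective (u - x)
  have hτ : ((Int.fract t : ℝ) : UnitAddCircle) = u - x := by
    rw [← ht, Int.fract, AddCircle.coe_sub]
    simp
  set τ := Int.fract t
  set i := ⌊τ * N⌋₊
  have hi₁ : (i : ℝ) ≤ τ * N := Nat.floor_le (by positivity)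
  have hi₂ : τ * N < i + 1 := Nat.lt_floor_add_one _
  have hiN : i ≤ N := Nat.floor_le_of_le (by nlinarith [Int.fract_lt_one t])
  refine ⟨x + i • (((N : ℝ)⁻¹ : ℝ) : UnitAddCircle), ?_, hx i hiN⟩
  rw [Metric.mem_ball, dist_comm, dist_eq_norm]
  calc ‖u - (x + i • (((N : ℝ)⁻¹ : ℝ) : UnitAddCircle))‖
      = ‖((τ - i * (N : ℝ)⁻¹ : ℝ) : UnitAddCircle)‖ := by
        rw [AddCircle.coe_sub, ← nsmul_eq_mul, AddCircle.coe_nsmul, hτ]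
        abel_nf
    _ ≤ |τ - i * (N : ℝ)⁻¹| := norm_coe_le_abs _
    _ < ε := by
        have h₁ : i * (N : ℝ)⁻¹ ≤ τ := by rwa [← div_eq_mul_inv, div_le_iff₀ hN₀]
        have h₂ : τ < i * (N : ℝ)⁻¹ + (N : ℝ)⁻¹ := by
          rwa [← add_one_mul, ← div_eq_mul_inv, lt_div_iff₀ hN₀]
        rw [abs_lt]
        constructor <;> linarith

theorem exists_isOfFinAddOrder_mem {a b : ℕ} (ha : 1 < a) (hb : 1 < b)
    (hind : ∀ m n : ℕ, a ^ m = b ^ n → m = 0 ∧ n = 0) (hYc : IsClosed Y) (hYne : Y.Nonempty)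
    (haY : a ∈ invariantMultipliers Y) (hbY : b ∈ invariantMultipliers Y) :
    ∃ x ∈ Y, IsOfFinAddOrder x := by
  by_contra! htor
  suffices Dense Y by
    exact htor 0 (hYc.closure_eq ▸ this.closure_eq ▸ mem_univ 0) IsOfFinAddOrder.zero
  refine dense_of_frequently_exists_forall_add_nsmul_mem <| frequently_atTop.2 fun n =>
    ⟨a * b * n + 1, by nlinarith [Nat.mul_pos (by omega : 0 < a) (by omega : 0 < b)], ?_⟩
  set N := a * b * n + 1
  set q : UnitAddCircle := (((N : ℝ)⁻¹ : ℝ) : UnitAddCircle)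
  have hNq : N • q = 0 := by
    rw [← AddCircle.coe_nsmul, nsmul_eq_mul, mul_inv_cancel₀ (by positivity)]
    exact AddCircle.coe_period 1
  have hfix : ∀ c, c ∣ a * b → c ^ N.totient ∈ invariantMultipliers {q} := fun c ⟨d, hd⟩ => by
    have hcop : c.Coprime N := by
      rw [Nat.coprime_comm, show N = c * (d * n) + 1 by rw [← mul_assoc, ← hd]]
      exact (Nat.coprime_mul_left_add_left 1 c _).2 (Nat.coprime_one_left c)
    exact mem_invariantMultipliers_singleton.2
      (nsmul_eq_self_of_modEq hNq (Nat.ModEq.pow_totient hcop))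
  exact exists_forall_add_nsmul_mem hYc hYne htor
    (Submonoid.isNonlacunary_closure_pow_pair ha hb hind (Nat.totient_pos.2 (by omega : 0 < N)).ne')
    (Submonoid.closure_le.2 (pair_subset (pow_mem haY _) (pow_mem hbY _)))
    (Submonoid.closure_le.2 (pair_subset (hfix a (dvd_mul_right a b)) (hfix b (dvd_mul_left b a))))
    N

theorem _root_.IsOfFinAddOrder.exists_pow_mem_invariantMultipliers {x : UnitAddCircle}
    (hx : IsOfFinAddOrder x) (n : ℕ) : ∃ i, ∃ e ≠ 0, n ^ e ∈ invariantMultipliers {n ^ i • x} := by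
  obtain ⟨i, j, hij, hx_eq⟩ := (AddCircle.finite_torsion (1 : ℝ) hx.addOrderOf_pos)
    |>.exists_lt_map_eq_of_forall_mem (f := fun k => n ^ k • x) fun k => by
      simp only [mem_ofPred_eq]
      rw [smul_comm, addOrderOf_nsmul_eq_zero, nsmul_zero]
  refine ⟨i, j - i, (Nat.sub_pos_of_lt hij).ne', mem_invariantMultipliers_singleton.2 ?_⟩
  rw [← mul_nsmul', ← pow_add, Nat.sub_add_cancel hij.le]
  exact hx_eq.symm

theorem exists_mem_pow_mem_invariantMultipliers_singleton {a b : ℕ}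
    (haY : a ∈ invariantMultipliers Y) (hbY : b ∈ invariantMultipliers Y) {x : UnitAddCircle}
    (hx : x ∈ Y) (hxtor : IsOfFinAddOrder x) :
    ∃ y ∈ Y, ∃ e ≠ 0, a ^ e ∈ invariantMultipliers {y} ∧ b ^ e ∈ invariantMultipliers {y} := by
  obtain ⟨i, e₁, he₁, ha'⟩ := hxtor.exists_pow_mem_invariantMultipliers a
  obtain ⟨j, e₂, he₂, hb'⟩ := (hxtor.nsmul (n := a ^ i)).exists_pow_mem_invariantMultipliers b
  refine ⟨b ^ j • a ^ i • x, pow_mem hbY j _ (pow_mem haY i x hx), e₁ * e₂, mul_ne_zero he₁ he₂,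
    ?_, ?_⟩
  · rw [pow_mul]
    exact mem_invariantMultipliers_singleton_nsmul (pow_mem ha' e₂) _
  · rw [mul_comm, pow_mul]
    exact pow_mem hb' e₁

end UnitAddCircle

/-- Furstenberg's ×a,×b theorem: if `a, b ≥ 2` are multiplicatively independent
integers, then every closed subset of the circle `ℝ/ℤ` invariant under both `x ↦ a·x`
and `x ↦ b·x` is finite or is the whole circle. -/
theorem furstenberg_times_a_times_b (a b : ℕ) (ha : 2 ≤ a) (hb : 2 ≤ b)
    (hind : ∀ m n : ℕ, a ^ m = b ^ n → m = 0 ∧ n = 0)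
    (S : Set (AddCircle (1 : ℝ))) (hclosed : IsClosed S)
    (haS : (fun x : AddCircle (1 : ℝ) => (a : ℤ) • x) '' S ⊆ S)
    (hbS : (fun x : AddCircle (1 : ℝ) => (b : ℤ) • x) '' S ⊆ S) :
    S.Finite ∨ S = Set.univ := by
  refine S.finite_or_infinite.imp_right fun hinf => ?_
  have haS' : a ∈ invariantMultipliers S := fun x hx => by simpa using haS (mem_image_of_mem _ hx)
  have hbS' : b ∈ invariantMultipliers S := fun x hx => by simpa using hbS (mem_image_of_mem _ hx)
  have haS'' := UnitAddCircle.mem_invariantMultipliers_derivedSet (by omega) haS'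
  have hbS'' := UnitAddCircle.mem_invariantMultipliers_derivedSet (by omega) hbS'
  obtain ⟨x, hx, hxtor⟩ := UnitAddCircle.exists_isOfFinAddOrder_mem ha hb hind
    (isClosed_derivedSet S) hinf.exists_accPt_principal haS'' hbS''
  obtain ⟨y, hy, e, he, hay, hby⟩ :=
    UnitAddCircle.exists_mem_pow_mem_invariantMultipliers_singleton haS'' hbS'' hx hxtor
  exact UnitAddCircle.eq_univ_of_fixed_mem_derivedSet hclosed
    (Submonoid.isNonlacunary_closure_pow_pair ha hb hind he)
    (Submonoid.closure_le.2 (pair_subset (pow_mem haS' e) (pow_mem hbS' e))) hy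
    (Submonoid.closure_le.2 (pair_subset hay hby))
end
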